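/- arXiv:1306.2070 — 10 statements merged into one kernel-verified Lean document; each statement's English description precedes it below -/
import Mathlib

section
/- Let R be a commutative ring and t ∈ R a non-zero-divisor such that ⋂_{n≥0} t^n R = 0. Let B be an R-algebra such that the module of Kähler differentials Ω_{B/R} is killed by t^e for some integer e ≥ 0. If s, s′ : B → R are two R-algebra homomorphisms such that s(b) ≡ s′(b) mod t^d R for all b ∈ B, for some integer d > e, then s = s′. -/
/-- Key step: if `s` and `s'` agree mod `t^k` with `e ≤ k`, they agree mod `t^(k+(k-e))`. -/
lemma stmt_2_step (R : Type*) [CommRing R] (B : Type*) [CommRing B] [Algebra R B]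
    (t : R) (ht : t ∈ nonZeroDivisors R)
    (e : ℕ) (hΩ : ∀ ω : KaehlerDifferential R B, algebraMap R B t ^ e • ω = 0)
    (s s' : B →ₐ[R] R) (k : ℕ) (hk : e ≤ k)
    (h : ∀ b : B, s b - s' b ∈ Ideal.span {t ^ k}) :
    ∀ b : B, s b - s' b ∈ Ideal.span {t ^ (k + (k - e))} := by
  set I : Ideal R := Ideal.span {t ^ (k + k)} with hI
  letI : Algebra B (R ⧸ I) := ((Ideal.Quotient.mk I).comp s'.toRingHom).toAlgebra
  haveI : IsScalarTower R B (R ⧸ I) := IsScalarTower.of_algebraMap_eq (fun r => by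
    simp [RingHom.algebraMap_toAlgebra, Ideal.Quotient.algebraMap_eq])
  have hBsmul : ∀ (b : B) (x : R), b • (Ideal.Quotient.mk I x) =
      Ideal.Quotient.mk I (s' b * x) := by
    intro b x
    rw [Algebra.smul_def, RingHom.algebraMap_toAlgebra]
    simp [← map_mul]
  let D : Derivation R B (R ⧸ I) :=
    { toFun := fun b => Ideal.Quotient.mk I (s b - s' b)
      map_add' := fun a b => by
        rw [show s (a + b) - s' (a + b) = (s a - s' a) + (s b - s' b) by
          rw [map_add, map_add]; ring, map_add]
      map_smul' := fun r b => by
        dsimp only [RingHom.id_apply]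
        rw [Algebra.smul_def, Algebra.smul_def, Ideal.Quotient.algebraMap_eq,
          map_mul, map_mul, AlgHom.commutes, AlgHom.commutes, Algebra.algebraMap_self_apply,
          ← map_mul, mul_sub]
      map_one_eq_zero' := by
        show Ideal.Quotient.mk I (s 1 - s' 1) = 0
        rw [map_one, map_one, sub_self, map_zero]
      leibniz' := fun a b => by
        show Ideal.Quotient.mk I (s (a * b) - s' (a * b)) =
          a • Ideal.Quotient.mk I (s b - s' b) + b • Ideal.Quotient.mk I (s a - s' a)
        rw [hBsmul, hBsmul, ← map_add, Ideal.Quotient.mk_eq_mk_iff_sub_mem]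
        have : s (a * b) - s' (a * b) - (s' a * (s b - s' b) + s' b * (s a - s' a))
            = (s a - s' a) * (s b - s' b) := by
          rw [map_mul, map_mul]; ring
        rw [this, hI]
        rw [Ideal.mem_span_singleton, pow_add]
        exact mul_dvd_mul (Ideal.mem_span_singleton.mp (h a))
          (Ideal.mem_span_singleton.mp (h b)) }
  have key : ∀ b : B, Ideal.Quotient.mk I (t ^ e * (s b - s' b)) = 0 := by
    intro b
    have h1 : (algebraMap R B t) ^ e • D b = 0 := by
      rw [← Derivation.liftKaehlerDifferential_comp_D D b, ← map_smul,
        hΩ (KaehlerDifferential.D R B b), map_zero]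
    have h2 : (algebraMap R B t) ^ e • D b =
        Ideal.Quotient.mk I (t ^ e * (s b - s' b)) := by
      show ((algebraMap R B t) ^ e) • (Ideal.Quotient.mk I (s b - s' b)) = _
      rw [hBsmul, map_pow, AlgHom.commutes, Algebra.algebraMap_self_apply]
    rw [← h2, h1]
  intro b
  have hmem : t ^ e * (s b - s' b) ∈ I := by
    rw [← Ideal.Quotient.eq_zero_iff_mem]; exact key b
  rw [hI, Ideal.mem_span_singleton] at hmem
  obtain ⟨c, hc⟩ := hmem
  rw [Ideal.mem_span_singleton]
  refine ⟨c, ?_⟩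
  have hreg : t ^ e ∈ nonZeroDivisors R := pow_mem ht e
  rw [← mul_cancel_left_mem_nonZeroDivisors hreg, hc,
    show k + k = e + (k + (k - e)) by omega, pow_add, mul_assoc]

/-- Let `R` be a commutative ring and `t ∈ R` a non-zero-divisor with `⋂ₙ tⁿR = 0`.
Let `B` be an `R`-algebra whose module of Kähler differentials `Ω_{B/R}` is killed by `t^e`.
If two `R`-algebra homomorphisms `s, s' : B → R` agree modulo `t^d R` for some `d > e`,
then `s = s'`. -/
theorem stmt_2 (R : Type*) [CommRing R] (B : Type*) [CommRing B] [Algebra R B]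
    (t : R) (ht : t ∈ nonZeroDivisors R)
    (hsep : (⨅ n : ℕ, Ideal.span {t ^ n}) = (⊥ : Ideal R))
    (e : ℕ) (hΩ : ∀ ω : KaehlerDifferential R B, algebraMap R B t ^ e • ω = 0)
    (d : ℕ) (hd : e < d)
    (s s' : B →ₐ[R] R)
    (hcong : ∀ b : B, s b - s' b ∈ Ideal.span {t ^ d}) :
    s = s' := by
  have hmono : ∀ {m n : ℕ} {x : R}, n ≤ m → x ∈ Ideal.span {t ^ m} →
      x ∈ Ideal.span {t ^ n} := by
    intro m n x hnm hx
    rw [Ideal.mem_span_singleton] at hx ⊢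
    exact dvd_trans (pow_dvd_pow t hnm) hx
  have hAll : ∀ n : ℕ, ∀ b : B, s b - s' b ∈ Ideal.span {t ^ (d + n)} := by
    intro n
    induction n with
    | zero => simpa using hcong
    | succ n ih =>
      have hk : e ≤ d + n := by omega
      have := stmt_2_step R B t ht e hΩ s s' (d + n) hk ih
      intro b
      exact hmono (by omega) (this b)
  ext b
  have : s b - s' b ∈ (⨅ n : ℕ, Ideal.span {t ^ n}) := by
    rw [Ideal.mem_iInf]
    intro n
    exact hmono (Nat.le_add_left n d) (hAll n b)
  rw [hsep] at this
  exact sub_eq_zero.mp (Ideal.mem_bot.mp this)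
end

section
/- (1) For every s ∈ S, the trace tr(s ⊗ 1) ∈ K lies in (the image of) R. (2) If I ⊆ R is an integrally closed ideal and s ∈ S is integral over I (i.e. s^n + a_1 s^{n−1} + ⋯ + a_n = 0 for some n ≥ 1 with a_i ∈ I^i), then tr(s ⊗ 1) ∈ I. -/
open TensorProduct

/-- `s ∈ S` is integral over the ideal `I ⊆ R`: it satisfies an equation
`s^n + a₁ s^{n−1} + ⋯ + aₙ = 0` with `aᵢ ∈ I^i`. -/
def IsIntegralOverIdeal {R S : Type*} [CommRing R] [CommRing S] [Algebra R S]
    (I : Ideal R) (s : S) : Prop :=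
  ∃ n : ℕ, 0 < n ∧ ∃ a : Fin n → R,
    (∀ i : Fin n, a i ∈ I ^ ((i : ℕ) + 1)) ∧
    s ^ n + ∑ i : Fin n, algebraMap R S (a i) * s ^ (n - ((i : ℕ) + 1)) = 0

/-!
After base change to an algebraic closure `L` of `K`, the trace of `x` in the finite `K`-algebra
`K ⊗[R] S` is the sum of the eigenvalues of multiplication by `x`, and each eigenvalue satisfies
every polynomial equation that `x` satisfies. An element `s` is integral over `I` exactly when
`C s * X` is integral over the Rees algebra `R[I X]`, so such elements are closed under sums. Hence
the trace is integral over `I` (over `R` for `I = R`); since `R` is integrally closed it lies in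
`R`, and since `I` is integrally closed it then lies in `I`.
-/

open Polynomial

section IntegralOverIdeal

variable {R S : Type*} [CommRing R] [CommRing S] [Algebra R S] {I : Ideal R}

theorem IsIntegralOverIdeal.exists_monic_aeval_eq_zero {s : S} (h : IsIntegralOverIdeal I s) :
    ∃ p : R[X], p.Monic ∧ aeval s p = 0 ∧ ∀ i, p.coeff i ∈ I ^ (p.natDegree - i) := by
  obtain ⟨n, hn, a, ha, hs⟩ := h
  set q : R[X] := ∑ i : Fin n, C (a i) * X ^ (n - (i + 1))
  have hq : q.degree < n := by
    refine (degree_sum_le _ _).trans_lt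
      ((Finset.sup_lt_iff (WithBot.bot_lt_coe n)).2 fun i _ => ?_)
    exact (degree_C_mul_X_pow_le _ _).trans_lt
      (WithBot.coe_lt_coe.2 (Nat.sub_lt hn i.succ_pos))
  have hdeg : (X ^ n + q).natDegree ≤ n :=
    natDegree_add_le_of_degree_le (natDegree_X_pow_le n) (natDegree_le_of_degree_le hq.le)
  refine ⟨X ^ n + q, monic_X_pow_add hq, by simpa [q] using hs, fun k => ?_⟩
  refine Ideal.pow_le_pow_right (Nat.sub_le_sub_right hdeg k) ?_
  rw [coeff_add, coeff_X_pow, finsetSum_coeff]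
  refine Ideal.add_mem _ ?_ (Ideal.sum_mem _ fun i _ => ?_)
  · split_ifs with h <;> simp [h]
  · rw [coeff_C_mul_X_pow]
    split_ifs with h
    · rw [h, Nat.sub_sub_self i.isLt]; exact ha i
    · exact zero_mem _

theorem isIntegralOverIdeal_of_monic {s : S} {p : R[X]} (hp : p.Monic) (hs : aeval s p = 0)
    (hpI : ∀ i, p.coeff i ∈ I ^ (p.natDegree - i)) : IsIntegralOverIdeal I s := by
  rcases Nat.eq_zero_or_pos p.natDegree with h0 | hpos
  · have : Subsingleton S := by
      rw [hp.natDegree_eq_zero.1 h0, map_one] at hs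
      exact subsingleton_of_zero_eq_one hs.symm
    exact ⟨1, one_pos, 0, fun _ => zero_mem _, Subsingleton.elim _ _⟩
  refine ⟨p.natDegree, hpos, fun i => p.coeff (p.natDegree - (i + 1)), fun i => ?_, ?_⟩
  · simpa [Nat.sub_sub_self i.isLt] using hpI (p.natDegree - (i + 1))
  · rw [aeval_eq_sum_range, Finset.sum_range_succ, hp.coeff_natDegree, one_smul] at hs
    rw [← hs, add_comm]
    congr 1
    rw [Fin.sum_univ_eq_sum_range (fun i => algebraMap R S (p.coeff (p.natDegree - (i + 1))) *
      s ^ (p.natDegree - (i + 1))), ← Finset.sum_range_reflect]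
    refine Finset.sum_congr rfl fun i hi => ?_
    have hreflect : p.natDegree - (p.natDegree - 1 - i + 1) = i := by
      have := Finset.mem_range.1 hi; omega
    rw [Algebra.smul_def, hreflect]

theorem isIntegralOverIdeal_iff {s : S} :
    IsIntegralOverIdeal I s ↔
      ∃ p : R[X], p.Monic ∧ aeval s p = 0 ∧ ∀ i, p.coeff i ∈ I ^ (p.natDegree - i) :=
  ⟨IsIntegralOverIdeal.exists_monic_aeval_eq_zero,
    fun ⟨_, hp, hs, hpI⟩ => isIntegralOverIdeal_of_monic hp hs hpI⟩

theorem isIntegralOverIdeal_top_iff {s : S} :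
    IsIntegralOverIdeal (⊤ : Ideal R) s ↔ IsIntegral R s := by
  simp [isIntegralOverIdeal_iff, Ideal.top_pow, IsIntegral, RingHom.IsIntegralElem, aeval_def]

theorem IsIntegralOverIdeal.map {T : Type*} [CommRing T] [Algebra R T] {s : S}
    (h : IsIntegralOverIdeal I s) (f : S →ₐ[R] T) : IsIntegralOverIdeal I (f s) := by
  obtain ⟨p, hp, hs, hpI⟩ := isIntegralOverIdeal_iff.1 h
  exact isIntegralOverIdeal_iff.2 ⟨p, hp, by rw [aeval_algHom_apply, hs, map_zero], hpI⟩

theorem IsIntegralOverIdeal.of_map {T : Type*} [CommRing T] [Algebra R T] {s : S}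
    {f : S →ₐ[R] T} (hf : Function.Injective f) (h : IsIntegralOverIdeal I (f s)) :
    IsIntegralOverIdeal I s := by
  obtain ⟨p, hp, hs, hpI⟩ := isIntegralOverIdeal_iff.1 h
  exact isIntegralOverIdeal_iff.2
    ⟨p, hp, hf (by rw [← aeval_algHom_apply, hs, map_zero]), hpI⟩

theorem Subalgebra.isIntegral_of_monic_of_coeff_mem {T U : Type*} [CommRing T] [CommRing U]
    [Algebra R T] [Algebra T U] (A : Subalgebra R T) {P : T[X]} (hP : P.Monic)
    (hPA : ∀ i, P.coeff i ∈ A) {y : U} (hy : aeval y P = 0) : IsIntegral A y := by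
  obtain ⟨Q, hQP, -, hQ⟩ := lifts_and_natDegree_eq_and_monic (f := algebraMap A T)
    ((lifts_iff_coeff_lifts P).2 fun i => Set.mem_range.2 ⟨⟨_, hPA i⟩, rfl⟩) hP
  refine ⟨Q, hQ, ?_⟩
  rw [IsScalarTower.algebraMap_eq A T U, ← eval₂_map, hQP]
  exact hy

theorem adjoin_C_mul_X_eq_reesAlgebra :
    Algebra.adjoin R {x | ∃ r ∈ I, C r * X = x} = reesAlgebra I := by
  rw [← adjoin_monomial_eq_reesAlgebra]
  congr 1
  ext
  simp [C_mul_X_eq_monomial]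

attribute [local instance] Polynomial.algebra

theorem isIntegral_C_mul_X_of_monic {s : S} {p : R[X]} (hp : p.Monic) (hs : aeval s p = 0)
    (hpI : ∀ i, p.coeff i ∈ I ^ (p.natDegree - i)) :
    IsIntegral (reesAlgebra I) (C s * X) := by
  -- scaling the roots by `X` multiplies the `i`-th coefficient by `X ^ (natDegree - i)`
  refine (reesAlgebra I).isIntegral_of_monic_of_coeff_mem (P := (p.map C).scaleRoots X)
    ((monic_scaleRoots_iff X).2 (hp.map C)) (fun i => ?_) ?_
  · rw [coeff_scaleRoots, coeff_map, natDegree_map_eq_of_injective C_injective,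
      C_mul_X_pow_eq_monomial]
    exact reesAlgebra.monomial_mem.2 (hpI i)
  · have hroot : aeval (C s) (p.map C) = 0 := by
      rw [← algebraMap_eq (R := R), aeval_map_algebraMap, ← CAlgHom_apply (R := R),
        aeval_algHom_apply, hs, map_zero]
    have := scaleRoots_aeval_eq_zero (r := (X : R[X])) hroot
    rwa [show algebraMap R[X] S[X] X = X from map_X _, mul_comm] at this

theorem isIntegralOverIdeal_iff_isIntegral_C_mul_X {s : S} :
    IsIntegralOverIdeal I s ↔ IsIntegral (reesAlgebra I) (C s * X) := by
  rw [isIntegralOverIdeal_iff]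
  refine ⟨fun ⟨p, hp, hs, hpI⟩ => isIntegral_C_mul_X_of_monic hp hs hpI, fun h => ?_⟩
  rw [← adjoin_C_mul_X_eq_reesAlgebra] at h
  exact exists_monic_aeval_eq_zero_forall_mem_pow_of_isIntegral h

theorem IsIntegralOverIdeal.multiset_sum {m : Multiset S}
    (h : ∀ s ∈ m, IsIntegralOverIdeal I s) : IsIntegralOverIdeal I m.sum := by
  rw [isIntegralOverIdeal_iff_isIntegral_C_mul_X, map_multiset_sum C m,
    ← Multiset.sum_map_mul_right]
  exact IsIntegral.multiset_sum (by simpa [isIntegralOverIdeal_iff_isIntegral_C_mul_X] using h)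

end IntegralOverIdeal

theorem aeval_eq_zero_of_mem_spectrum {R L A : Type*} [CommRing R] [Field L] [Ring A]
    [Algebra R L] [Algebra L A] [Algebra R A] [IsScalarTower R L A] {a : A} {μ : L}
    (hμ : μ ∈ spectrum L a) {p : R[X]} (hp : aeval a p = 0) : aeval μ p = 0 := by
  have h := spectrum.subset_polynomial_aeval a (p.map (algebraMap R L)) ⟨μ, hμ, rfl⟩
  rw [aeval_map_algebraMap, hp, spectrum.mem_iff, sub_zero] at h
  rw [← aeval_map_algebraMap L, coe_aeval_eq_eval]
  by_contra hne
  exact h ((IsUnit.mk0 _ hne).map (algebraMap L A))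

theorem algebraMap_trace_eq_sum_roots_charpoly {K L B ι : Type*} [Field K] [Field L]
    [IsAlgClosed L] [Algebra K L] [CommRing B] [Algebra K B] [Fintype ι] [DecidableEq ι]
    (b : Module.Basis ι K B) (x : B) :
    algebraMap K L (Algebra.trace K B x) =
      ((Algebra.leftMulMatrix b x).map (algebraMap K L)).charpoly.roots.sum := by
  rw [Algebra.trace_eq_matrix_trace b, AddMonoidHom.map_trace, Matrix.trace_eq_sum_roots_charpoly]

theorem IsIntegralOverIdeal.algebraMap_trace {R K L B : Type*} [CommRing R] [Field K] [Field L]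
    [IsAlgClosed L] [CommRing B] [Algebra R K] [Algebra K L] [Algebra R L] [IsScalarTower R K L]
    [Algebra K B] [Algebra R B] [IsScalarTower R K B] [Module.Finite K B] {I : Ideal R} {x : B}
    (hx : IsIntegralOverIdeal I x) :
    IsIntegralOverIdeal I (algebraMap K L (Algebra.trace K B x)) := by
  classical
  let b := Module.finBasis K B
  let ψ : B →ₐ[R] Matrix (Fin (Module.finrank K B)) (Fin (Module.finrank K B)) L :=
    ((Algebra.ofId K L).mapMatrix.comp (Algebra.leftMulMatrix b)).restrictScalars R
  obtain ⟨p, hp, hpx, hpI⟩ := isIntegralOverIdeal_iff.1 hx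
  have hpψ : aeval (ψ x) p = 0 := by rw [aeval_algHom_apply, hpx, map_zero]
  rw [algebraMap_trace_eq_sum_roots_charpoly b]
  refine IsIntegralOverIdeal.multiset_sum fun μ hμ => isIntegralOverIdeal_iff.2 ⟨p, hp, ?_, hpI⟩
  exact aeval_eq_zero_of_mem_spectrum
    (Matrix.mem_spectrum_iff_isRoot_charpoly.2 (isRoot_of_mem_roots hμ)) hpψ

theorem stmt_5_general (R : Type u) [CommRing R] [IsIntegrallyClosed R]
    (K : Type u) [Field K] [Algebra R K] [IsFractionRing R K]
    (S : Type u) [CommRing S] [Algebra R S] [Module.Finite R S] :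
    (∀ s : S,
      Algebra.trace K (K ⊗[R] S) ((1 : K) ⊗ₜ[R] s) ∈ (algebraMap R K).range) ∧
    ∀ I : Ideal R, (∀ x : R, IsIntegralOverIdeal I x → x ∈ I) →
      ∀ s : S, IsIntegralOverIdeal I s →
        ∃ r ∈ I, Algebra.trace K (K ⊗[R] S) ((1 : K) ⊗ₜ[R] s) = algebraMap R K r := by
  have integral_trace (I : Ideal R) (s : S) (hs : IsIntegralOverIdeal I s) :
      IsIntegralOverIdeal I (algebraMap K (AlgebraicClosure K)
        (Algebra.trace K (K ⊗[R] S) ((1 : K) ⊗ₜ[R] s))) :=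
    (hs.map (Algebra.TensorProduct.includeRight (A := K))).algebraMap_trace
  have trace_mem_range (s : S) :
      Algebra.trace K (K ⊗[R] S) ((1 : K) ⊗ₜ[R] s) ∈ (algebraMap R K).range := by
    have h := integral_trace ⊤ s (isIntegralOverIdeal_top_iff.2 (.of_finite R s))
    exact IsIntegrallyClosed.isIntegral_iff.1
      ((isIntegral_algebraMap_iff (algebraMap K _).injective).1 (isIntegralOverIdeal_top_iff.1 h))
  refine ⟨trace_mem_range, fun I hI s hs => ?_⟩
  obtain ⟨r, hr⟩ := trace_mem_range s
  refine ⟨r, hI r ?_, hr.symm⟩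
  have h := integral_trace I s hs
  rw [← hr, ← IsScalarTower.algebraMap_apply] at h
  exact h.of_map (f := Algebra.ofId R (AlgebraicClosure K))
    ((algebraMap K _).injective.comp (IsFractionRing.injective R K))

/-- Let `R` be an integrally closed domain with fraction field `K`, and `S` a finite
`R`-algebra which is generically étale, i.e. `K ⊗_R S` is a finite étale `K`-algebra.
(1) For every `s ∈ S`, the trace `tr(1 ⊗ s) ∈ K` of the finite `K`-algebra `K ⊗_R S`
lies in (the image of) `R`.
(2) If `I ⊆ R` is an integrally closed ideal and `s ∈ S` is integral over `I`, then
`tr(1 ⊗ s)` lies in (the image of) `I`. -/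
theorem stmt_5 (R : Type u) [CommRing R] [IsDomain R] [IsIntegrallyClosed R]
    (K : Type u) [Field K] [Algebra R K] [IsFractionRing R K]
    (S : Type u) [CommRing S] [Algebra R S] [Module.Finite R S]
    [Module.Finite K (K ⊗[R] S)] [Algebra.Etale K (K ⊗[R] S)] :
    (∀ s : S,
      Algebra.trace K (K ⊗[R] S) ((1 : K) ⊗ₜ[R] s) ∈ (algebraMap R K).range) ∧
    ∀ I : Ideal R, (∀ x : R, IsIntegralOverIdeal I x → x ∈ I) →
      ∀ s : S, IsIntegralOverIdeal I s →
        ∃ r ∈ I, Algebra.trace K (K ⊗[R] S) ((1 : K) ⊗ₜ[R] s) = algebraMap R K r :=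
  stmt_5_general R K S
end

section
/- Assume in addition that A is Noetherian and integrally closed. For all nonzero f, g ∈ A: (1) the natural map A^{1/p^∞} → Hom_{A^{1/p^∞}}(g^{1/p^∞}A^{1/p^∞}, A^{1/p^∞}), sending x to multiplication by x, is an isomorphism; (2) the induced map A^{1/p^∞}/(f) → Hom_{A^{1/p^∞}}(g^{1/p^∞}A^{1/p^∞}, A^{1/p^∞}/(f)) is injective. -/
/-!
Everything reduces to a divisibility statement in `B = A^{1/p^∞}`: if `c ∣ b * g^{1/p^n}` for
all `n`, then `c ∣ b`. Writing `b^k g = (b g^{1/p^n})^k (g^{1/p^n})^{p^n - k}` for `k ≤ p^n`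
gives `c^k ∣ b^k g` for every `k`. A common `p^n`-th power moves `b, c` to `a, a' ∈ A`, and
divisibility descends from `B` to `A` because `A` is integrally closed. In `A`, `a'^k ∣ a^k g`
for all `k` says that `a / a'` is almost integral, hence integral since `A` is Noetherian, hence
in `A`. A homomorphism `φ : J → B` is then multiplication by `φ(g) / g ∈ B`, and `x J ⊆ (f)`
means `f ∣ x g^{1/p^n}` for all `n`.
-/

theorem dvd_of_forall_pow_dvd_pow_mul {A : Type*} [CommRing A] [IsDomain A] [IsNoetherianRing A]
    [IsIntegrallyClosed A] {a c g : A} (hg : g ≠ 0) (h : ∀ k, c ^ k ∣ a ^ k * g) : c ∣ a := by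
  by_cases hc : c = 0
  · obtain ⟨d, hd⟩ := h 1
    simp_all
  let K := FractionRing A
  have hcK : algebraMap A K c ≠ 0 := (map_ne_zero_iff _ (IsFractionRing.injective A K)).mpr hc
  have hz : IsAlmostIntegral A (algebraMap A K a / algebraMap A K c) := by
    refine ⟨g, mem_nonZeroDivisors_of_ne_zero hg, fun k => ?_⟩
    obtain ⟨d, hd⟩ := h k
    refine ⟨d, ?_⟩
    rw [Algebra.smul_def, div_pow, mul_div_assoc', eq_div_iff (pow_ne_zero k hcK), ← map_pow,
      ← map_pow, ← map_mul, ← map_mul, mul_comm g, hd, mul_comm]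
  obtain ⟨w, hw⟩ := IsIntegrallyClosed.isIntegral_iff.mp hz.isIntegral
  exact ⟨w, IsFractionRing.injective A K (by rw [map_mul, hw, mul_div_cancel₀ _ hcK])⟩

theorem pow_dvd_pow_mul_of_forall_dvd_mul {M : Type*} [CommMonoid M] {q : ℕ} (hq : 1 < q)
    {r : ℕ → M} {s : M} (hr : ∀ n, r n ^ q ^ n = s) {b c : M} (h : ∀ n, c ∣ b * r n) (k : ℕ) :
    c ^ k ∣ b ^ k * s := by
  have hk : k ≤ q ^ k := (Nat.lt_pow_self hq).le
  calc c ^ k ∣ (b * r k) ^ k * r k ^ (q ^ k - k) := (pow_dvd_pow_of_dvd (h k) k).mul_right _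
    _ = b ^ k * s := by rw [mul_pow, mul_assoc, ← pow_add, Nat.add_sub_cancel' hk, hr]

section PRadical

variable {p : ℕ} {A B : Type*} [CommRing A] [CommRing B] [Algebra A B]

theorem exists_pow_pow_mem_range_pair
    (hroots : ∀ b : B, ∃ n : ℕ, b ^ p ^ n ∈ (algebraMap A B).range) (x y : B) :
    ∃ (n : ℕ) (a a' : A), algebraMap A B a = x ^ p ^ n ∧ algebraMap A B a' = y ^ p ^ n := by
  obtain ⟨m, a, ha⟩ := hroots x
  obtain ⟨n, a', ha'⟩ := hroots y
  refine ⟨m + n, a ^ p ^ n, a' ^ p ^ m, ?_, ?_⟩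
  · rw [map_pow, ha, pow_add, pow_mul]
  · rw [map_pow, ha', add_comm, pow_add, pow_mul]

variable [ExpChar B p]

theorem dvd_of_algebraMap_dvd [IsDomain A] [IsIntegrallyClosed A]
    (hinj : Function.Injective (algebraMap A B))
    (hroots : ∀ b : B, ∃ n : ℕ, b ^ p ^ n ∈ (algebraMap A B).range) {a c : A}
    (h : algebraMap A B c ∣ algebraMap A B a) : c ∣ a := by
  obtain ⟨d, hd⟩ := h
  obtain ⟨m, e, he⟩ := hroots d
  refine (IsIntegrallyClosed.pow_dvd_pow_iff (pow_ne_zero m (expChar_ne_zero B p))).mp ⟨e, ?_⟩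
  exact hinj (by rw [map_pow, hd, map_mul, map_pow, he, mul_pow])

variable [PerfectRing B p]

theorem isDomain_of_pow_mem_range [IsDomain A] (hinj : Function.Injective (algebraMap A B))
    (hroots : ∀ b : B, ∃ n : ℕ, b ^ p ^ n ∈ (algebraMap A B).range) : IsDomain B := by
  have : Nontrivial B := hinj.nontrivial
  refine @NoZeroDivisors.to_isDomain B _ _ ⟨fun {x y} hxy => ?_⟩
  obtain ⟨n, a, a', ha, ha'⟩ := exists_pow_pow_mem_range_pair hroots x y
  have hfrob (z : B) : z ^ p ^ n = 0 → z = 0 := (map_eq_zero_iff (iterateFrobeniusEquiv B p n)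
    (iterateFrobeniusEquiv B p n).injective).mp
  have : a * a' = 0 := hinj (by rw [map_mul, ha, ha', ← mul_pow, hxy, map_zero,
    zero_pow (pow_ne_zero n (expChar_ne_zero B p))])
  rcases mul_eq_zero.mp this with h | h
  · exact .inl (hfrob x (by rw [← ha, h, map_zero]))
  · exact .inr (hfrob y (by rw [← ha', h, map_zero]))

theorem dvd_of_forall_dvd_mul_root [IsDomain A] [IsNoetherianRing A] [IsIntegrallyClosed A]
    (hp : 1 < p) (hinj : Function.Injective (algebraMap A B))
    (hroots : ∀ b : B, ∃ n : ℕ, b ^ p ^ n ∈ (algebraMap A B).range) {g : A} (hg : g ≠ 0)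
    {r : ℕ → B} (hr : ∀ n, r n ^ p ^ n = algebraMap A B g) {b c : B} (h : ∀ n, c ∣ b * r n) :
    c ∣ b := by
  obtain ⟨n, a, a', ha, ha'⟩ := exists_pow_pow_mem_range_pair hroots b c
  have hA (k : ℕ) : a' ^ k ∣ a ^ k * g := by
    refine dvd_of_algebraMap_dvd hinj hroots ?_
    rw [map_pow, map_mul, map_pow, ha, ha', ← pow_mul, ← pow_mul]
    exact pow_dvd_pow_mul_of_forall_dvd_mul hp hr h _
  have : c ^ p ^ n ∣ b ^ p ^ n := by
    rw [← ha, ← ha']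
    exact map_dvd _ (dvd_of_forall_pow_dvd_pow_mul hg hA)
  exact (map_dvd_iff (iterateFrobeniusEquiv B p n)).mp this

end PRadical

theorem exists_lsmul_comp_subtype_eq {R ι : Type*} [CommRing R] [IsDomain R] {r : ι → R}
    {i₀ : ι} (h₀ : r i₀ ≠ 0) (hdvd : ∀ c, (∀ i, r i₀ ∣ c * r i) → r i₀ ∣ c)
    (φ : Ideal.span (Set.range r) →ₗ[R] R) :
    ∃ b, (LinearMap.lsmul R R b).comp (Ideal.span (Set.range r)).subtype = φ := by
  let gen (i : ι) : Ideal.span (Set.range r) := ⟨r i, Ideal.subset_span ⟨i, rfl⟩⟩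
  have hswap (i : ι) : r i₀ * φ (gen i) = φ (gen i₀) * r i := by
    rw [← smul_eq_mul, ← map_smul, mul_comm, ← smul_eq_mul, ← map_smul]
    exact congrArg φ (Subtype.ext (mul_comm _ _))
  obtain ⟨b, hb⟩ := hdvd (φ (gen i₀)) fun i => ⟨φ (gen i), (hswap i).symm⟩
  refine ⟨b, LinearMap.ext_on Submodule.span_span_coe_preimage ?_⟩
  rintro x ⟨i, hi⟩
  obtain rfl : x = gen i := Subtype.ext hi.symm
  refine mul_left_cancel₀ h₀ ?_
  simp only [LinearMap.comp_apply, Submodule.subtype_apply, LinearMap.lsmul_apply, smul_eq_mul]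
  rw [hswap, hb]
  ring

theorem stmt_7_general (p : ℕ) [Fact p.Prime]
    (A : Type*) [CommRing A] [IsDomain A] [IsNoetherianRing A] [IsIntegrallyClosed A]
    (B : Type*) [CommRing B] [ExpChar B p] [PerfectRing B p]
    [Algebra A B] (hinj : Function.Injective (algebraMap A B))
    (hroots : ∀ b : B, ∃ n : ℕ, b ^ p ^ n ∈ (algebraMap A B).range)
    (f g : A) (hg : g ≠ 0)
    (J : Ideal B)
    (hJ : J = Ideal.span (Set.range fun n : ℕ =>
      ((frobeniusEquiv B p).symm)^[n] (algebraMap A B g))) :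
    Function.Bijective (fun x : B => (LinearMap.lsmul B B x).comp J.subtype) ∧
    ∀ x : B, (∀ j ∈ J, x * j ∈ Ideal.span {algebraMap A B f}) →
      x ∈ Ideal.span {algebraMap A B f} := by
  have := isDomain_of_pow_mem_range hinj hroots
  set r : ℕ → B := fun n => ((frobeniusEquiv B p).symm)^[n] (algebraMap A B g)
  have hdvd {b c : B} : (∀ n, c ∣ b * r n) → c ∣ b :=
    dvd_of_forall_dvd_mul_root (Fact.out : p.Prime).one_lt hinj hroots hg
      (iterate_frobeniusEquiv_symm_pow_p_pow B p _)
  have hr₀ : r 0 ≠ 0 := (map_ne_zero_iff _ hinj).mpr hg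
  subst hJ
  refine ⟨⟨fun x y hxy => ?_, exists_lsmul_comp_subtype_eq hr₀ fun c => hdvd⟩, fun x hx => ?_⟩
  · exact mul_right_cancel₀ hr₀ (LinearMap.congr_fun hxy ⟨r 0, Ideal.subset_span ⟨0, rfl⟩⟩)
  · exact Ideal.mem_span_singleton.mpr
      (hdvd fun n => Ideal.mem_span_singleton.mp (hx _ (Ideal.subset_span ⟨n, rfl⟩)))

/-- Let `A` be a Noetherian integrally closed domain of characteristic `p`, and let `B` be
its perfect closure `A^{1/p^∞}` (a perfect ring containing `A` such that every element has
some `p`-power in `A`).  Let `0 ≠ f, g ∈ A` and let `J = g^{1/p^∞}·B` be the ideal generated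
by all `p`-power roots `g^{1/p^n}` of `g`.  Then:
(1) the natural map `B → Hom_B(J, B)`, sending `x` to multiplication by `x`, is bijective;
(2) the induced map `B/(f) → Hom_B(J, B/(f))` is injective, i.e. if `x·J ⊆ (f)` then
`x ∈ (f)`. -/
theorem stmt_7 (p : ℕ) [Fact p.Prime]
    (A : Type*) [CommRing A] [IsDomain A] [IsNoetherianRing A] [IsIntegrallyClosed A]
    [CharP A p]
    (B : Type*) [CommRing B] [CharP B p] [ExpChar B p] [PerfectRing B p]
    [Algebra A B] (hinj : Function.Injective (algebraMap A B))
    (hroots : ∀ b : B, ∃ n : ℕ, b ^ p ^ n ∈ (algebraMap A B).range)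
    (f g : A) (hf : f ≠ 0) (hg : g ≠ 0)
    (J : Ideal B)
    (hJ : J = Ideal.span (Set.range fun n : ℕ =>
      ((frobeniusEquiv B p).symm)^[n] (algebraMap A B g))) :
    Function.Bijective (fun x : B => (LinearMap.lsmul B B x).comp J.subtype) ∧
    ∀ x : B, (∀ j ∈ J, x * j ∈ Ideal.span {algebraMap A B f}) →
      x ∈ Ideal.span {algebraMap A B f} :=
  stmt_7_general p A B hinj hroots f g hg J hJ
end

section
/- Assume in addition that A is Noetherian and that A^{1/p^∞} is flat as an A-module. Let 0 ≠ g ∈ A. Then for every A-module M and every nonzero x ∈ M, there exists n ≥ 0 such that g^{1/p^n}·(x ⊗ 1) is nonzero in M ⊗_A A^{1/p^∞}. -/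
/-!
Let `I` be the annihilator of `x`. By flatness, `b ⊗ x = 0` forces `b ∈ I·B`, so if every
`g^{1/p^n}` killed `1 ⊗ x` we would get `g ∈ (I·B)^{p^n} = I^{p^n}·B`. Since `B` is integral
over `A` and contains it, lying over makes the flat extension `A → B` faithfully flat, so
`I^{p^n}·B ∩ A = I^{p^n}`. Hence `g ∈ ⋂ₘ Iᵐ`, which is zero by the Krull intersection theorem
because `I ≠ A`.
-/

open TensorProduct

universe u v

lemma Module.Flat.mem_map_ker_toSpanSingleton_of_tmul_eq_zero {A B M : Type*} [CommRing A]
    [CommRing B] [Algebra A B] [Module.Flat A B] [AddCommGroup M] [Module A M] {x : M} {b : B}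
    (h : b ⊗ₜ[A] x = 0) :
    b ∈ Ideal.map (algebraMap A B) (LinearMap.ker (LinearMap.toSpanSingleton A M x)) := by
  set I := LinearMap.ker (LinearMap.toSpanSingleton A M x)
  have hexact : Function.Exact I.subtype (LinearMap.toSpanSingleton A M x) := by
    rw [LinearMap.exact_iff, Submodule.range_subtype]
  obtain ⟨t, ht⟩ := (Module.Flat.lTensor_exact B hexact (b ⊗ₜ[A] (1 : A))).mp (by simpa using h)
  have hb : b = TensorProduct.rid A B (I.subtype.lTensor B t) := by simp [ht]
  rw [hb]
  clear hb ht
  induction t using TensorProduct.induction_on with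
  | zero => simp
  | tmul c i =>
    simpa [Algebra.smul_def] using
      Ideal.mul_mem_right c _ (Ideal.mem_map_of_mem (algebraMap A B) i.2)
  | add t₁ t₂ h₁ h₂ => simpa only [map_add] using Ideal.add_mem _ h₁ h₂

lemma Algebra.isIntegral_of_forall_pow_mem_range {A B : Type*} [CommRing A] [CommRing B]
    [Algebra A B] {p : ℕ} (hp : p ≠ 0)
    (hroots : ∀ b : B, ∃ n : ℕ, b ^ p ^ n ∈ (algebraMap A B).range) :
    Algebra.IsIntegral A B := by
  refine ⟨fun b ↦ ?_⟩
  obtain ⟨n, a, ha⟩ := hroots b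
  exact IsIntegral.of_pow (pow_pos (Nat.pos_of_ne_zero hp) n) (ha ▸ isIntegral_algebraMap)

lemma iterate_frobeniusEquiv_symm_pow_pow {B : Type*} [CommRing B] (p : ℕ) [ExpChar B p]
    [PerfectRing B p] (n : ℕ) (b : B) : ((frobeniusEquiv B p).symm)^[n] b ^ p ^ n = b := by
  induction n generalizing b with
  | zero => simp
  | succ n ih =>
    rw [Function.iterate_succ_apply, pow_succ, pow_mul, ih, frobeniusEquiv_symm_pow_p]

lemma mem_ker_toSpanSingleton_pow_of_tmul_eq_zero {A B M : Type*} [CommRing A] [CommRing B]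
    [Algebra A B] [Module.FaithfullyFlat A B] [AddCommGroup M] [Module A M] {x : M} {b : B}
    (h : b ⊗ₜ[A] x = 0) {a : A} {N : ℕ} (hab : b ^ N = algebraMap A B a) :
    a ∈ LinearMap.ker (LinearMap.toSpanSingleton A M x) ^ N := by
  rw [← Ideal.comap_map_eq_self_of_faithfullyFlat (B := B) (_ ^ N), Ideal.mem_comap, ← hab,
    Ideal.map_pow]
  exact Ideal.pow_mem_pow (Module.Flat.mem_map_ker_toSpanSingleton_of_tmul_eq_zero h) N

theorem stmt_8_general (p : ℕ) [Fact p.Prime]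
    (A : Type u) [CommRing A] [IsDomain A] [IsNoetherianRing A]
    (B : Type u) [CommRing B] [ExpChar B p] [PerfectRing B p]
    [Algebra A B] (hinj : Function.Injective (algebraMap A B))
    (hroots : ∀ b : B, ∃ n : ℕ, b ^ p ^ n ∈ (algebraMap A B).range)
    [Module.Flat A B]
    (g : A) (hg : g ≠ 0)
    (M : Type v) [AddCommGroup M] [Module A M] (x : M) (hx : x ≠ 0) :
    ∃ n : ℕ,
      ((frobeniusEquiv B p).symm)^[n] (algebraMap A B g) • ((1 : B) ⊗ₜ[A] x) ≠
        (0 : B ⊗[A] M) := by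
  by_contra! hcon
  have hp : p.Prime := Fact.out
  have := Algebra.isIntegral_of_forall_pow_mem_range hp.ne_zero hroots
  have := (faithfulSMul_iff_algebraMap_injective A B).mpr hinj
  have : Module.FaithfullyFlat A B :=
    .of_comap_surjective (Algebra.IsIntegral.comap_surjective A B)
  set I := LinearMap.ker (LinearMap.toSpanSingleton A M x)
  have hI : I ≠ ⊤ := fun h ↦ hx (by simpa [I] using (Ideal.eq_top_iff_one I).mp h)
  have hmem : ∀ m, g ∈ I ^ m := fun m ↦
    Ideal.pow_le_pow_right (Nat.lt_pow_self hp.one_lt).le <|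
      mem_ker_toSpanSingleton_pow_of_tmul_eq_zero
        (by simpa [TensorProduct.smul_tmul'] using hcon m)
        (iterate_frobeniusEquiv_symm_pow_pow p m _)
  have hbot : g ∈ ⨅ m, I ^ m := Submodule.mem_iInf _ |>.mpr hmem
  rw [Ideal.iInf_pow_eq_bot_of_isDomain I hI, Ideal.mem_bot] at hbot
  exact hg hbot

/-- Let `A` be a Noetherian domain of characteristic `p`, and let `B` be its perfect closure
`A^{1/p^∞}` (a perfect ring containing `A` such that every element has some `p`-power in
`A`); assume `B` is flat as an `A`-module.  Let `0 ≠ g ∈ A`.  Then for every `A`-module `M`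
and every nonzero `x ∈ M`, there exists `n ≥ 0` such that `g^{1/p^n}·(x ⊗ 1)` is nonzero in
`M ⊗_A A^{1/p^∞}`. -/
theorem stmt_8 (p : ℕ) [Fact p.Prime]
    (A : Type u) [CommRing A] [IsDomain A] [IsNoetherianRing A] [CharP A p]
    (B : Type u) [CommRing B] [CharP B p] [ExpChar B p] [PerfectRing B p]
    [Algebra A B] (hinj : Function.Injective (algebraMap A B))
    (hroots : ∀ b : B, ∃ n : ℕ, b ^ p ^ n ∈ (algebraMap A B).range)
    [Module.Flat A B]
    (g : A) (hg : g ≠ 0)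
    (M : Type v) [AddCommGroup M] [Module A M] (x : M) (hx : x ≠ 0) :
    ∃ n : ℕ,
      ((frobeniusEquiv B p).symm)^[n] (algebraMap A B g) • ((1 : B) ⊗ₜ[A] x) ≠
        (0 : B ⊗[A] M) :=
  stmt_8_general p A B hinj hroots g hg M x hx
end

section
/- Assume in addition that A is Noetherian and that A^{1/p^∞} is flat as an A-module. Then for all nonzero f, g ∈ A one has ⋂_{n≥0} ( f·A^{1/p^∞} + g^{1−1/p^n}·A^{1/p^∞} ) = f·A^{1/p^∞} + g·A^{1/p^∞}, where g^{1−1/p^n} denotes the unique p^n-th root (g^{p^n−1})^{1/p^n} of g^{p^n−1} in A^{1/p^∞}. -/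
/-!
For `x` in the intersection write `x ^ p ^ m = z ∈ A` and `I = (f ^ p ^ m, g ^ p ^ m)`.
Raising the membership of `x` at level `m + n` to the `p ^ (m + n)`-th power, multiplying by
`g ^ p ^ m` and taking `p ^ n`-th roots gives `g ^ (p ^ m / p ^ n) * z ∈ I B`. Flatness turns
this into `g ^ (p ^ m / p ^ n) ∈ (I : z) B`, so `g ^ p ^ m ∈ (I : z) ^ p ^ n B ∩ A`, which is
`(I : z) ^ p ^ n` by faithful flatness (`B` is integral over `A`). Krull's intersection theorem
then forces `(I : z) = A`, i.e. `z ∈ I`, and taking `p ^ m`-th roots gives `x ∈ (f, g) B`.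
-/

open TensorProduct

namespace Ideal

variable {A B : Type*} [CommRing A] [CommRing B] [Algebra A B]

theorem Quotient.mk_tmul_eq_zero_iff (I : Ideal A) (a : A) (b : B) :
    Ideal.Quotient.mk I a ⊗ₜ[A] b = 0 ↔ a • b ∈ I.map (algebraMap A B) := by
  rw [← (quotTensorEquivQuotSMul B I).map_eq_zero_iff, quotTensorEquivQuotSMul_mk_tmul,
    Submodule.Quotient.mk_eq_zero, smul_top_eq_map]
  rfl

theorem ker_mkQ_comp_mulRight (J : Ideal A) (z : A) :
    LinearMap.ker (J.mkQ ∘ₗ LinearMap.mulRight A z) = J.colon {z} := by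
  ext a
  simp only [LinearMap.mem_ker, LinearMap.comp_apply, LinearMap.mulRight_apply,
    Submodule.mkQ_apply, Submodule.Quotient.mk_eq_zero, Submodule.mem_colon_singleton, smul_eq_mul]

theorem mem_map_colon_of_mul_mem_map [Module.Flat A B] {J : Ideal A} {z : A} {u : B}
    (h : u * algebraMap A B z ∈ J.map (algebraMap A B)) :
    u ∈ (J.colon {z}).map (algebraMap A B) := by
  -- `z` induces an injection `A ⧸ (J : z) → A ⧸ J`, which stays injective after `⊗[A] B`
  set ψ := (J.colon {z}).liftQ _ (ker_mkQ_comp_mulRight J z).ge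
  have hψ : Function.Injective ψ := by
    rw [← LinearMap.ker_eq_bot]
    exact Submodule.ker_liftQ_eq_bot' _ _ (ker_mkQ_comp_mulRight J z).symm
  have h1 : Ideal.Quotient.mk (J.colon {z}) 1 ⊗ₜ[A] u = 0 := by
    apply Module.Flat.rTensor_preserves_injective_linearMap (M := B) _ hψ
    rw [map_zero, LinearMap.rTensor_tmul]
    change Ideal.Quotient.mk J (1 * z) ⊗ₜ[A] u = 0
    rwa [one_mul, Quotient.mk_tmul_eq_zero_iff, Algebra.smul_def, mul_comm]
  rwa [Quotient.mk_tmul_eq_zero_iff, one_smul] at h1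

theorem mem_colon_pow_of_mul_mem_map [Module.FaithfullyFlat A B] {J : Ideal A} {y z : A}
    {u : B} {k : ℕ} (hu : u ^ k = algebraMap A B y)
    (h : u * algebraMap A B z ∈ J.map (algebraMap A B)) : y ∈ J.colon {z} ^ k := by
  rw [← comap_map_eq_self_of_faithfullyFlat (B := B) (J.colon {z} ^ k), mem_comap,
    Ideal.map_pow, ← hu]
  exact pow_mem_pow (mem_map_colon_of_mul_mem_map h) k

end Ideal

theorem Module.FaithfullyFlat.of_isIntegral {A B : Type*} [CommRing A] [CommRing B] [Algebra A B]
    [Module.Flat A B] [Algebra.IsIntegral A B] [FaithfulSMul A B] :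
    Module.FaithfullyFlat A B :=
  of_comap_surjective fun P ↦ by
    obtain ⟨Q, -, hQ, hQP⟩ := Ideal.exists_ideal_over_prime_of_isIntegral (S := B) P.1 ⊥ (by
      rw [← RingHom.ker_eq_comap_bot,
        (RingHom.injective_iff_ker_eq_bot _).mp (FaithfulSMul.algebraMap_injective A B)]
      exact bot_le)
    exact ⟨⟨Q, hQ⟩, PrimeSpectrum.ext hQP⟩

theorem Algebra.IsIntegral.of_pow_mem_range {A B : Type*} [CommRing A] [CommRing B] [Algebra A B]
    (h : ∀ b : B, ∃ n ≠ 0, b ^ n ∈ (algebraMap A B).range) : Algebra.IsIntegral A B where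
  isIntegral b := by
    obtain ⟨n, hn, a, ha⟩ := h b
    exact .of_pow (Nat.pos_of_ne_zero hn) (ha ▸ isIntegral_algebraMap)

theorem Ideal.eq_top_of_forall_mem_pow {A : Type*} [CommRing A] [IsNoetherianRing A] [IsDomain A]
    {I : Ideal A} {y : A} (hy : y ≠ 0) (h : ∀ n, y ∈ I ^ n) : I = ⊤ := by
  by_contra hI
  have hmem : y ∈ ⨅ n, I ^ n := Submodule.mem_iInf _ |>.mpr h
  rw [Ideal.iInf_pow_eq_bot_of_isDomain I hI, Ideal.mem_bot] at hmem
  exact hy hmem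

section PerfectRing

variable {R : Type*} [CommRing R] (p : ℕ) [ExpChar R p] [PerfectRing R p]

theorem frobeniusEquiv_symm_iterate (n : ℕ) :
    (⇑(frobeniusEquiv R p).symm)^[n] = ⇑(iterateFrobeniusEquiv R p n).symm := by
  rw [iterateFrobeniusEquiv_symm, RingAut.coe_pow]

theorem iterateFrobeniusEquiv_symm_pow_p_pow (n : ℕ) (x : R) :
    (iterateFrobeniusEquiv R p n).symm x ^ p ^ n = x :=
  (iterateFrobeniusEquiv R p n).apply_symm_apply x

theorem pow_mem_span_image_pow_iff (n : ℕ) (s : Set R) (x : R) :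
    x ^ p ^ n ∈ Ideal.span ((· ^ p ^ n) '' s) ↔ x ∈ Ideal.span s := by
  rw [← Ideal.apply_mem_of_equiv_iff (I := Ideal.span s) (f := iterateFrobeniusEquiv R p n),
    Ideal.map_span]
  rfl

theorem iterateFrobeniusEquiv_symm_pow_sub_one_dvd (n : ℕ) (x : R) :
    (iterateFrobeniusEquiv R p n).symm (x ^ (p ^ n - 1)) ∣ x := by
  refine ⟨(iterateFrobeniusEquiv R p n).symm x, ?_⟩
  rw [← map_mul, ← pow_succ, Nat.sub_add_cancel (Nat.one_le_pow _ _ (expChar_pos R p))]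
  exact ((iterateFrobeniusEquiv R p n).symm_apply_apply x).symm

theorem iterateFrobeniusEquiv_symm_pow_mul_pow_mem_span {x F G : R} {m n : ℕ}
    (hx : x ∈ Ideal.span {F, (iterateFrobeniusEquiv R p (m + n)).symm (G ^ (p ^ (m + n) - 1))}) :
    (iterateFrobeniusEquiv R p n).symm (G ^ p ^ m) * x ^ p ^ m ∈
      Ideal.span {F ^ p ^ m, G ^ p ^ m} := by
  rw [← pow_mem_span_image_pow_iff p (m + n), Set.image_pair,
    iterateFrobeniusEquiv_symm_pow_p_pow, Ideal.mem_span_pair] at hx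
  obtain ⟨a, b, hab⟩ := hx
  rw [← pow_mem_span_image_pow_iff p n, Set.image_pair, Ideal.mem_span_pair]
  refine ⟨a * G ^ p ^ m, b * G ^ (p ^ m - 1), ?_⟩
  have hm := Nat.one_le_pow m p (expChar_pos R p)
  have hmn := Nat.one_le_pow (m + n) p (expChar_pos R p)
  have hG : G ^ (p ^ m - 1) * G ^ p ^ (m + n) = G ^ p ^ m * G ^ (p ^ (m + n) - 1) := by
    rw [← pow_add, ← pow_add]
    congr 1
    omega
  rw [mul_pow, iterateFrobeniusEquiv_symm_pow_p_pow, ← pow_mul, ← pow_mul, ← pow_mul,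
    ← pow_add, ← hab]
  linear_combination b * hG

end PerfectRing

theorem stmt_9_general (p : ℕ) [Fact p.Prime]
    (A : Type*) [CommRing A] [IsDomain A] [IsNoetherianRing A]
    (B : Type*) [CommRing B] [ExpChar B p] [PerfectRing B p]
    [Algebra A B] (hinj : Function.Injective (algebraMap A B))
    (hroots : ∀ b : B, ∃ n : ℕ, b ^ p ^ n ∈ (algebraMap A B).range)
    [Module.Flat A B]
    (f g : A) (hg : g ≠ 0) :
    (⨅ n : ℕ, Ideal.span {algebraMap A B f,
        ((frobeniusEquiv B p).symm)^[n] (algebraMap A B g ^ (p ^ n - 1))}) =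
      Ideal.span {algebraMap A B f, algebraMap A B g} := by
  have hp : p.Prime := Fact.out
  have : FaithfulSMul A B := (faithfulSMul_iff_algebraMap_injective A B).mpr hinj
  have : Algebra.IsIntegral A B := .of_pow_mem_range fun b ↦
    let ⟨n, hn⟩ := hroots b; ⟨p ^ n, (pow_pos hp.pos n).ne', hn⟩
  have : Module.FaithfullyFlat A B := .of_isIntegral
  simp_rw [frobeniusEquiv_symm_iterate]
  refine le_antisymm (fun x hx ↦ ?_) (le_iInf fun n ↦ ?_)
  · obtain ⟨m, z, hz⟩ := hroots x
    set I := Ideal.span {f ^ p ^ m, g ^ p ^ m}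
    have hIB : I.map (algebraMap A B) =
        Ideal.span {algebraMap A B f ^ p ^ m, algebraMap A B g ^ p ^ m} := by
      simp [I, Ideal.map_span, Set.image_pair]
    have hpow (n : ℕ) : g ^ p ^ m ∈ I.colon {z} ^ p ^ n := by
      have hmem := iterateFrobeniusEquiv_symm_pow_mul_pow_mem_span p
        (Submodule.mem_iInf _ |>.mp hx (m + n))
      rw [← hz, ← hIB] at hmem
      exact Ideal.mem_colon_pow_of_mul_mem_map
        (by rw [iterateFrobeniusEquiv_symm_pow_p_pow, map_pow]) hmem
    have hzI : z ∈ I := by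
      have := Ideal.eq_top_of_forall_mem_pow (pow_ne_zero _ hg) fun n ↦
        Ideal.pow_le_pow_right (Nat.lt_pow_self hp.one_lt).le (hpow n)
      simpa using (Submodule.colon_eq_top_iff_subset _).mp this
    rw [← pow_mem_span_image_pow_iff p m, Set.image_pair, ← hIB, ← hz]
    exact Ideal.mem_map_of_mem _ hzI
  · rw [Ideal.span_le, Set.insert_subset_iff, Set.singleton_subset_iff]
    exact ⟨Ideal.subset_span (by simp), Ideal.mem_of_dvd _
      (iterateFrobeniusEquiv_symm_pow_sub_one_dvd p n _) (Ideal.subset_span (by simp))⟩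

/-- Let `A` be a Noetherian domain of characteristic `p`, and let `B` be its perfect closure
`A^{1/p^∞}` (a perfect ring containing `A` such that every element has some `p`-power in
`A`); assume `B` is flat as an `A`-module.  Then for all nonzero `f, g ∈ A` one has
`⋂ₙ (f·B + g^{1−1/pⁿ}·B) = f·B + g·B`, where `g^{1−1/pⁿ} = (g^{pⁿ−1})^{1/pⁿ}`. -/
theorem stmt_9 (p : ℕ) [Fact p.Prime]
    (A : Type*) [CommRing A] [IsDomain A] [IsNoetherianRing A] [CharP A p]
    (B : Type*) [CommRing B] [CharP B p] [ExpChar B p] [PerfectRing B p]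
    [Algebra A B] (hinj : Function.Injective (algebraMap A B))
    (hroots : ∀ b : B, ∃ n : ℕ, b ^ p ^ n ∈ (algebraMap A B).range)
    [Module.Flat A B]
    (f g : A) (hf : f ≠ 0) (hg : g ≠ 0) :
    (⨅ n : ℕ, Ideal.span {algebraMap A B f,
        ((frobeniusEquiv B p).symm)^[n] (algebraMap A B g ^ (p ^ n - 1))}) =
      Ideal.span {algebraMap A B f, algebraMap A B g} :=
  stmt_9_general p A B hinj hroots f g hg
end

section
/- Let f ∈ R and let J ⊆ R be an ideal stable under p-th roots (x ∈ J implies x^{1/p} ∈ J). Then for every a ∈ J divisible by f in R and every m ≥ 0, one has f^{1/p^m}·a ∈ f·J. Consequently, the kernel of the natural map J/fJ → R/fR is killed by f^{1/p^m} for every m ≥ 0 (it is almost zero with respect to the ideal generated by all f^{1/p^m}). -/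
section aux
variable (p : ℕ) (R : Type*) [CommRing R] [ExpChar R p] [PerfectRing R p]

lemma aux_iterate_symm_pow (n : ℕ) (x : R) :
    ((⇑(frobeniusEquiv R p).symm)^[n] x) ^ p ^ n = x := by
  induction n with
  | zero => simp
  | succ k ih =>
    rw [Function.iterate_succ_apply', pow_succ, mul_comm (p ^ k) p, pow_mul,
      frobeniusEquiv_symm_pow_p, ih]

end aux

/-- Let `R` be a perfect commutative ring of characteristic `p`, `f ∈ R`, and `J ⊆ R` an
ideal stable under `p`-th roots.  Then for every `a ∈ J` divisible by `f` and every `m ≥ 0`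
one has `f^{1/p^m}·a ∈ f·J`; consequently the kernel of `J/fJ → R/fR` is killed by
`f^{1/p^m}` for every `m`. -/
theorem stmt_10 (p : ℕ) [Fact p.Prime]
    (R : Type*) [CommRing R] [CharP R p] [ExpChar R p] [PerfectRing R p]
    (f : R) (J : Ideal R)
    (hJ : ∀ x ∈ J, (frobeniusEquiv R p).symm x ∈ J) :
    ∀ a ∈ J, f ∣ a → ∀ m : ℕ,
      ((frobeniusEquiv R p).symm)^[m] f * a ∈ Ideal.span {f} * J := by
  intro a ha hfa m
  obtain ⟨b, hb⟩ := hfa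
  have hcJ' : ∀ n : ℕ, (⇑(frobeniusEquiv R p).symm)^[n] a ∈ J := by
    intro n
    induction n with
    | zero => simpa
    | succ k ih => rw [Function.iterate_succ_apply']; exact hJ _ ih
  set c : R → R := (⇑(frobeniusEquiv R p).symm)^[m] with hc
  have hFc : ∀ x : R, (c x) ^ p ^ m = x := fun x => aux_iterate_symm_pow p R m x
  have hp1 : 1 ≤ p ^ m := Nat.one_le_pow _ _ (Fact.out : p.Prime).pos
  -- injectivity of x ↦ x^{p^m}
  have hinj : Function.Injective fun x : R => x ^ p ^ m := by
    intro x y hxy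
    have := (injective_frobenius R p).iterate m
    apply this
    simpa [iterate_frobenius] using hxy
  -- membership of iterated root of a
  have hcJ : c a ∈ J := hcJ' m
  -- key identity: f^{1/p^m}·a = f·a^{1/p^m}·(b^{1-1/p^m})
  have key : c f * a = f * (c a * (c b) ^ (p ^ m - 1)) := by
    apply hinj
    have hbpow : b ^ p ^ m = b * b ^ (p ^ m - 1) := by
      conv_lhs => rw [← Nat.sub_add_cancel hp1, pow_succ']
    simp only
    rw [mul_pow, mul_pow, mul_pow, ← pow_mul, mul_comm (p ^ m - 1), pow_mul,
      hFc, hFc, hFc, hb, mul_pow f b, hbpow]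
    ring
  rw [key]
  exact Ideal.mul_mem_mul (Ideal.mem_span_singleton_self f) (J.mul_mem_right _ hcJ)
end

section
/- Let Q ∈ S[T^{±1}][[X]] be a power series with Q ≡ 1 mod X. Then there is at most one family (Q_m)_{m∈ℤ} of power series with Q_m ≡ 1 mod X, Q_m lying in S[[XT^m]], and Q_m = 1 for all but finitely many m, such that Q = ∏_{m∈ℤ} Q_m. Moreover, if Q is a polynomial in X (i.e. Q ∈ S[T^{±1}][X]), then each Q_m in such a factorization is a polynomial in X (i.e. Q_m ∈ S[XT^m]). -/
open LaurentPolynomial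

/-- A power series `Q ∈ S[T^{±1}][[X]]` "lies in `S[[XT^m]]`" if for every `k` the
coefficient of `X^k` has the form `c·T^{mk}` with `c ∈ S`. -/
def InXTpow (S : Type*) [CommRing S] (m : ℤ) (Q : PowerSeries (LaurentPolynomial S)) :
    Prop :=
  ∀ k : ℕ, ∃ c : S,
    PowerSeries.coeff (R := LaurentPolynomial S) k Q = LaurentPolynomial.C c * T (m * k)

/-!
Let `β` be the largest index of a factor. Every other factor, hence their product `Q'`, has
its `X^k`-coefficient supported in `T`-degrees `≤ (β - 1)k`, so the coefficient of `X^k T^{βk}`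
in `Q = Q_β Q'` is the one of `Q_β`. This determines `Q_β`, which is a unit, and cancelling it
gives uniqueness by induction on the number of factors.

If moreover `Q` has `X`-degree `≤ N` and all indices are `≥ α`, the same comparison shows
that `Q_β` is a polynomial. Since `S[[XT^β]]` is the image of `S[[X]]` under `X ↦ XT^β`,
`Q_β⁻¹` again lies in it, and the `X^k`-coefficient of `Q' = Q_β⁻¹ Q` lives in `T`-degrees
between `βk - (β - α)N` and `(β - 1)k`, so it vanishes for `k > (β - α)N`, and induction
applies to `Q'`.
-/

open PowerSeries hiding C
open Set
open scoped Pointwise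

section Support

variable {R : Type*} [Semiring R]

def SupportedIn (s : ℕ → Set ℤ) (P : PowerSeries R[T;T⁻¹]) : Prop :=
  ∀ k, ↑(coeff k P).coeff.support ⊆ s k

variable {s t u : ℕ → Set ℤ} {P P' : PowerSeries R[T;T⁻¹]}

theorem SupportedIn.coeff_coeff_eq_zero (h : SupportedIn s P) {k : ℕ} {j : ℤ} (hj : j ∉ s k) :
    (coeff k P).coeff j = 0 :=
  Finsupp.notMem_support_iff.mp fun hmem => hj (h k hmem)

theorem SupportedIn.mono (h : SupportedIn s P) (hst : ∀ k, s k ⊆ t k) : SupportedIn t P :=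
  fun k => (h k).trans (hst k)

theorem SupportedIn.mul (hP : SupportedIn s P) (hP' : SupportedIn t P')
    (hst : ∀ k l, s k + t l ⊆ u (k + l)) : SupportedIn u (P * P') := by
  classical
  intro k
  rw [coeff_mul, AddMonoidAlgebra.coeff_sum]
  refine (Finset.coe_subset.mpr Finsupp.support_finsetSum).trans ?_
  simp only [Finset.coe_biUnion, iUnion_subset_iff]
  intro p hp
  rw [← Finset.HasAntidiagonal.mem_antidiagonal.mp hp]
  refine (Finset.coe_subset.mpr (AddMonoidAlgebra.support_coeff_mul_subset _ _)).trans ?_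
  rw [Finset.coe_add]
  exact (add_subset_add (hP p.1) (hP' p.2)).trans (hst p.1 p.2)

theorem supportedIn_one (h : (0 : ℤ) ∈ s 0) : SupportedIn s (1 : PowerSeries R[T;T⁻¹]) := by
  intro k
  rw [coeff_one]
  split_ifs with hk
  · subst hk
    exact (Finset.coe_subset.mpr Finsupp.support_single_subset).trans (by simpa using h)
  · simp

theorem SupportedIn.mul_Iic {b c c' : ℤ} (hP : SupportedIn (fun k => Iic (b * k + c)) P)
    (hP' : SupportedIn (fun k => Iic (b * k + c')) P') :
    SupportedIn (fun k => Iic (b * k + (c + c'))) (P * P') :=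
  hP.mul hP' fun _ _ =>
    (Iic_add_Iic_subset _ _).trans (Iic_subset_Iic.mpr (le_of_eq (by push_cast; ring)))

theorem SupportedIn.mul_Ici {a c c' : ℤ} (hP : SupportedIn (fun k => Ici (a * k + c)) P)
    (hP' : SupportedIn (fun k => Ici (a * k + c')) P') :
    SupportedIn (fun k => Ici (a * k + (c + c'))) (P * P') :=
  hP.mul hP' fun _ _ =>
    (Ici_add_Ici_subset _ _).trans (Ici_subset_Ici.mpr (le_of_eq (by push_cast; ring)))

theorem SupportedIn.Ici_of_coeff_eq_zero {α β : ℤ} {N : ℕ} (hαβ : α ≤ β)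
    (hP : SupportedIn (fun k => Ici (α * k)) P) (hN : ∀ k > N, coeff k P = 0) :
    SupportedIn (fun k => Ici (β * k + -((β - α) * N))) P := by
  intro k
  by_cases hk : N < k
  · simp [hN k hk]
  · refine (hP k).trans (Ici_subset_Ici.mpr ?_)
    have : (k : ℤ) ≤ N := by exact_mod_cast not_lt.mp hk
    nlinarith

end Support

theorem supportedIn_prod {R ι : Type*} [CommSemiring R] {s : ℕ → Set ℤ} {E : Finset ι}
    {F : ι → PowerSeries R[T;T⁻¹]} (h0 : (0 : ℤ) ∈ s 0) (hs : ∀ k l, s k + s l ⊆ s (k + l))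
    (hF : ∀ i ∈ E, SupportedIn s (F i)) : SupportedIn s (∏ i ∈ E, F i) :=
  Finset.prod_induction F (SupportedIn s) (fun _ _ ha hb => ha.mul hb hs) (supportedIn_one h0) hF

theorem coeff_coeff_mul_of_supportedIn_Iic {R : Type*} [Ring R] {β : ℤ}
    {A B : PowerSeries R[T;T⁻¹]} (hA : SupportedIn (fun k => Iic (β * k)) A)
    (hB : SupportedIn (fun k => Iic ((β - 1) * k)) B) (hB0 : constantCoeff B = 1) (k : ℕ) :
    (coeff k (A * B)).coeff (β * k) = (coeff k A).coeff (β * k) := by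
  have hB1 : SupportedIn (fun k => Iic (β * k + -1)) (B - 1) := by
    rintro (_ | k)
    · simp [hB0]
    · rw [map_sub, coeff_one, if_neg k.succ_ne_zero, sub_zero]
      exact (hB _).trans (Iic_subset_Iic.mpr (by push_cast; linarith))
  have hAIic : SupportedIn (fun k => Iic (β * k + 0)) A := by simpa using hA
  have hAB1 := hAIic.mul_Iic hB1
  rw [show A * B = A + A * (B - 1) by rw [mul_sub, mul_one, add_sub_cancel], map_add,
    AddMonoidAlgebra.coeff_add, Finsupp.add_apply, hAB1.coeff_coeff_eq_zero (by simp), add_zero]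

section InXTpow

variable {S : Type*} [CommRing S] {m : ℤ} {P P' : PowerSeries S[T;T⁻¹]}

theorem InXTpow.coeff_eq (h : InXTpow S m P) (k : ℕ) :
    coeff k P = AddMonoidAlgebra.single (m * k) ((coeff k P).coeff (m * k)) := by
  obtain ⟨c, hc⟩ := h k
  rw [hc, ← single_eq_C_mul_T, AddMonoidAlgebra.coeff_single, Finsupp.single_eq_same]

theorem InXTpow.ext (h : InXTpow S m P) (h' : InXTpow S m P')
    (hc : ∀ k : ℕ, (coeff k P).coeff (m * k) = (coeff k P').coeff (m * k)) : P = P' :=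
  PowerSeries.ext fun k => by rw [h.coeff_eq k, h'.coeff_eq k, hc k]

theorem InXTpow.coeff_eq_zero (h : InXTpow S m P) {k : ℕ}
    (hc : (coeff k P).coeff (m * k) = 0) : coeff k P = 0 := by
  rw [h.coeff_eq k, hc, AddMonoidAlgebra.single_zero]

theorem InXTpow.supportedIn (h : InXTpow S m P) : SupportedIn (fun k => {m * (k : ℤ)}) P := by
  intro k
  rw [h.coeff_eq k, AddMonoidAlgebra.coeff_single]
  exact Finset.coe_subset.mpr Finsupp.support_single_subset |>.trans (by simp)

theorem InXTpow.supportedIn_Iic {b : ℤ} (h : InXTpow S m P) (hmb : m ≤ b) :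
    SupportedIn (fun k => Iic (b * k)) P :=
  h.supportedIn.mono fun _ =>
    singleton_subset_iff.mpr (mul_le_mul_of_nonneg_right hmb (by positivity))

theorem InXTpow.supportedIn_Ici {a : ℤ} (h : InXTpow S m P) (ham : a ≤ m) :
    SupportedIn (fun k => Ici (a * k)) P :=
  h.supportedIn.mono fun _ =>
    singleton_subset_iff.mpr (mul_le_mul_of_nonneg_right ham (by positivity))

theorem inXTpow_rescale_map (m : ℤ) (P₀ : PowerSeries S) :
    InXTpow S m (rescale (T m) (map C P₀)) :=
  fun k => ⟨coeff k P₀, by rw [coeff_rescale, coeff_map, T_pow, mul_comm, mul_comm (k : ℤ)]⟩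

theorem InXTpow.eq_rescale_map (h : InXTpow S m P) :
    P = rescale (T m) (map C (mk fun k => (coeff k P).coeff (m * k))) := by
  ext1 k
  conv_lhs => rw [h.coeff_eq k]
  rw [coeff_rescale, coeff_map, coeff_mk, T_pow, single_eq_C_mul_T, mul_comm, mul_comm (k : ℤ)]

theorem InXTpow.exists_inXTpow_mul_eq_one (h : InXTpow S m P) (h0 : constantCoeff P = 1) :
    ∃ P', InXTpow S m P' ∧ P' * P = 1 := by
  set P₀ : PowerSeries S := mk fun k => (coeff k P).coeff (m * k)
  have hP₀ : constantCoeff P₀ = ((1 : Sˣ) : S) := by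
    rw [← coeff_zero_eq_constantCoeff_apply, coeff_mk, coeff_zero_eq_constantCoeff_apply, h0]
    simp
  refine ⟨rescale (T m) (map C (invOfUnit P₀ 1)), inXTpow_rescale_map m _, ?_⟩
  calc rescale (T m) (map C (invOfUnit P₀ 1)) * P
      = rescale (T m) (map C (invOfUnit P₀ 1 * P₀)) := by
        rw [map_mul, map_mul, ← h.eq_rescale_map]
    _ = 1 := by rw [invOfUnit_mul _ _ hP₀, map_one, map_one]

end InXTpow

section Factorization

variable {S : Type*} [CommRing S] {E : Finset ℤ} {F F' : ℤ → PowerSeries S[T;T⁻¹]}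

theorem supportedIn_prod_Iic {b : ℤ} (hF : ∀ m ∈ E, InXTpow S m (F m)) (hb : ∀ m ∈ E, m ≤ b) :
    SupportedIn (fun k => Iic (b * k)) (∏ m ∈ E, F m) :=
  supportedIn_prod (by simp)
    (fun _ _ => (Iic_add_Iic_subset _ _).trans (Iic_subset_Iic.mpr (le_of_eq (by push_cast; ring))))
    fun m hm => (hF m hm).supportedIn_Iic (hb m hm)

theorem supportedIn_prod_Ici {a : ℤ} (hF : ∀ m ∈ E, InXTpow S m (F m)) (ha : ∀ m ∈ E, a ≤ m) :
    SupportedIn (fun k => Ici (a * k)) (∏ m ∈ E, F m) :=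
  supportedIn_prod (by simp)
    (fun _ _ => (Ici_add_Ici_subset _ _).trans (Ici_subset_Ici.mpr (le_of_eq (by push_cast; ring))))
    fun m hm => (hF m hm).supportedIn_Ici (ha m hm)

theorem constantCoeff_prod_eq_one (hF0 : ∀ m ∈ E, constantCoeff (F m) = 1) :
    constantCoeff (∏ m ∈ E, F m) = 1 := by
  rw [map_prod]
  exact Finset.prod_eq_one hF0

theorem eq_of_prod_eq (hF : ∀ m ∈ E, InXTpow S m (F m)) (hF0 : ∀ m ∈ E, constantCoeff (F m) = 1)
    (hF' : ∀ m ∈ E, InXTpow S m (F' m)) (hF'0 : ∀ m ∈ E, constantCoeff (F' m) = 1)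
    (h : ∏ m ∈ E, F m = ∏ m ∈ E, F' m) : ∀ m ∈ E, F m = F' m := by
  induction E using Finset.induction_on_max with
  | empty => simp
  | insert a s has ih =>
    have has' : a ∉ s := fun ha => (has a ha).false
    rw [Finset.prod_insert has', Finset.prod_insert has'] at h
    simp only [Finset.forall_mem_insert] at hF hF0 hF' hF'0 ⊢
    have hlt : ∀ m ∈ s, m ≤ a - 1 := fun m hm => Int.le_sub_one_of_lt (has m hm)
    have htop : F a = F' a := hF.1.ext hF'.1 fun k => by
      rw [← coeff_coeff_mul_of_supportedIn_Iic (hF.1.supportedIn_Iic le_rfl)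
          (supportedIn_prod_Iic hF.2 hlt) (constantCoeff_prod_eq_one hF0.2),
        ← coeff_coeff_mul_of_supportedIn_Iic (hF'.1.supportedIn_Iic le_rfl)
          (supportedIn_prod_Iic hF'.2 hlt) (constantCoeff_prod_eq_one hF'0.2), h]
    have hunit : IsUnit (F a) := isUnit_iff_constantCoeff.mpr (by rw [hF0.1]; exact isUnit_one)
    rw [← htop] at h
    exact ⟨htop, ih hF.2 hF0.2 hF'.2 hF'0.2 (hunit.mul_left_cancel h)⟩

theorem coeff_eq_zero_of_supportedIn_mul {β c : ℤ} {A B : PowerSeries S[T;T⁻¹]}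
    (hA : InXTpow S β A) (hA0 : constantCoeff A = 1)
    (hB : SupportedIn (fun k => Iic ((β - 1) * k)) B)
    (hAB : SupportedIn (fun k => Ici (β * k + c)) (A * B)) {k : ℕ} (hk : -c < k) :
    coeff k B = 0 := by
  obtain ⟨A', hA', hA'A⟩ := hA.exists_inXTpow_mul_eq_one hA0
  have hA'Ici : SupportedIn (fun k => Ici (β * k + 0)) A' := by
    simpa using hA'.supportedIn_Ici le_rfl
  have hB' : SupportedIn (fun k => Ici (β * k + (0 + c))) B := by
    rw [show B = A' * (A * B) by rw [← mul_assoc, hA'A, one_mul]]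
    exact hA'Ici.mul_Ici hAB
  rw [← AddMonoidAlgebra.coeff_inj, AddMonoidAlgebra.coeff_zero, ← Finsupp.support_eq_empty,
    ← Finset.coe_eq_empty, eq_empty_iff_forall_notMem]
  intro j hj
  have h1 := hB k hj
  have h2 := hB' k hj
  simp only [mem_Iic, mem_Ici] at h1 h2
  linarith

theorem eventually_coeff_eq_zero_of_prod (hF : ∀ m ∈ E, InXTpow S m (F m))
    (hF0 : ∀ m ∈ E, constantCoeff (F m) = 1) (N : ℕ)
    (hN : ∀ k > N, coeff k (∏ m ∈ E, F m) = 0) :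
    ∀ m ∈ E, ∃ N' : ℕ, ∀ k > N', coeff k (F m) = 0 := by
  induction E using Finset.induction_on_max generalizing N with
  | empty => simp
  | insert a s has ih =>
    have has' : a ∉ s := fun ha => (has a ha).false
    obtain ⟨α, hα⟩ := (insert a s).bddBelow
    have hQ := (supportedIn_prod_Ici hF hα).Ici_of_coeff_eq_zero (hα (s.mem_insert_self a)) hN
    rw [Finset.prod_insert has'] at hN hQ
    simp only [Finset.forall_mem_insert] at hF hF0 ⊢
    have hB := supportedIn_prod_Iic hF.2 fun m hm => Int.le_sub_one_of_lt (has m hm)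
    refine ⟨⟨N, fun k hk => hF.1.coeff_eq_zero ?_⟩,
      ih hF.2 hF0.2 ((a - α) * N).toNat fun k hk =>
        coeff_eq_zero_of_supportedIn_mul hF.1 hF0.1 hB hQ (by omega)⟩
    rw [← coeff_coeff_mul_of_supportedIn_Iic (hF.1.supportedIn_Iic le_rfl) hB
      (constantCoeff_prod_eq_one hF0.2), hN k hk]
    rfl

end Factorization

theorem stmt_12_general (S : Type*) [CommRing S]
    (Q : PowerSeries (LaurentPolynomial S)) :
    (∀ (D D' : Finset ℤ) (F F' : ℤ → PowerSeries (LaurentPolynomial S)),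
      (∀ m, InXTpow S m (F m)) →
      (∀ m, PowerSeries.constantCoeff (R := LaurentPolynomial S) (F m) = 1) →
      (∀ m ∉ D, F m = 1) → (∏ m ∈ D, F m) = Q →
      (∀ m, InXTpow S m (F' m)) →
      (∀ m, PowerSeries.constantCoeff (R := LaurentPolynomial S) (F' m) = 1) →
      (∀ m ∉ D', F' m = 1) → (∏ m ∈ D', F' m) = Q →
      ∀ m, F m = F' m) ∧
    ((∃ N : ℕ, ∀ k > N, PowerSeries.coeff (R := LaurentPolynomial S) k Q = 0) →
      ∀ (D : Finset ℤ) (F : ℤ → PowerSeries (LaurentPolynomial S)),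
        (∀ m, InXTpow S m (F m)) →
        (∀ m, PowerSeries.constantCoeff (R := LaurentPolynomial S) (F m) = 1) →
        (∀ m ∉ D, F m = 1) → (∏ m ∈ D, F m) = Q →
        ∀ m, ∃ N : ℕ, ∀ k > N, PowerSeries.coeff (R := LaurentPolynomial S) k (F m) = 0) := by
  constructor
  · intro D D' F F' hF hF0 hFD hFQ hF' hF'0 hF'D' hF'Q m
    have hprod : ∏ m ∈ D ∪ D', F m = ∏ m ∈ D ∪ D', F' m := by
      rw [← Finset.prod_subset D.subset_union_left fun m _ hm => hFD m hm,
        ← Finset.prod_subset D.subset_union_right fun m _ hm => hF'D' m hm, hFQ, hF'Q]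
    by_cases hm : m ∈ D ∪ D'
    · exact eq_of_prod_eq (fun m _ => hF m) (fun m _ => hF0 m) (fun m _ => hF' m)
        (fun m _ => hF'0 m) hprod m hm
    · rw [Finset.mem_union, not_or] at hm
      rw [hFD m hm.1, hF'D' m hm.2]
  · rintro ⟨N, hN⟩ D F hF hF0 hFD hFQ m
    by_cases hm : m ∈ D
    · exact eventually_coeff_eq_zero_of_prod (fun m _ => hF m) (fun m _ => hF0 m) N
        (hFQ ▸ hN) m hm
    · exact ⟨0, fun k hk => by rw [hFD m hm, coeff_one, if_neg hk.ne']⟩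

/-- Let `S` be a commutative ring and `Q ∈ S[T^{±1}][[X]]` with `Q ≡ 1 mod X`.  There is at
most one way to write `Q = ∏_{m ∈ ℤ} Q_m` with `Q_m ∈ S[[XT^m]]`, `Q_m ≡ 1 mod X`, and
almost all `Q_m = 1`.  Moreover, if `Q` is a polynomial in `X`, then so is each `Q_m` in
such a factorization. -/
theorem stmt_12 (S : Type*) [CommRing S]
    (Q : PowerSeries (LaurentPolynomial S))
    (hQ : PowerSeries.constantCoeff (R := LaurentPolynomial S) Q = 1) :
    (∀ (D D' : Finset ℤ) (F F' : ℤ → PowerSeries (LaurentPolynomial S)),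
      (∀ m, InXTpow S m (F m)) →
      (∀ m, PowerSeries.constantCoeff (R := LaurentPolynomial S) (F m) = 1) →
      (∀ m ∉ D, F m = 1) → (∏ m ∈ D, F m) = Q →
      (∀ m, InXTpow S m (F' m)) →
      (∀ m, PowerSeries.constantCoeff (R := LaurentPolynomial S) (F' m) = 1) →
      (∀ m ∉ D', F' m = 1) → (∏ m ∈ D', F' m) = Q →
      ∀ m, F m = F' m) ∧
    ((∃ N : ℕ, ∀ k > N, PowerSeries.coeff (R := LaurentPolynomial S) k Q = 0) →
      ∀ (D : Finset ℤ) (F : ℤ → PowerSeries (LaurentPolynomial S)),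
        (∀ m, InXTpow S m (F m)) →
        (∀ m, PowerSeries.constantCoeff (R := LaurentPolynomial S) (F m) = 1) →
        (∀ m ∉ D, F m = 1) → (∏ m ∈ D, F m) = Q →
        ∀ m, ∃ N : ℕ, ∀ k > N, PowerSeries.coeff (R := LaurentPolynomial S) k (F m) = 0) :=
  stmt_12_general S Q
end

section
/- Let I ⊆ S be a nilpotent ideal (I^N = 0 for some N ≥ 1) and let f ∈ S[G][U] be a polynomial with constant term 1, with f ≡ 1 mod I, and with f(1) = 1 (evaluating U at 1 in S[G]). Then there exist finitely many triples (a_j, z_j, g_j) with integers a_j ≥ 1, elements z_j ∈ I, and g_j ∈ G, such that f · ∏_j (1 − U^{a_j} z_j g_j) = ∏_j (1 − U^{a_j+1} z_j g_j) in S[G][U]; equivalently, f is a finite product of the units (1 − U^{a+1} z g)·(1 − U^{a} z g)^{−1} with a ≥ 1, z ∈ I, g ∈ G. -/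
/-!
Write `f - 1 = ∑ cₙ Uⁿ` with `n ≥ 1`. Since `∑ cₙ = f(1) - 1 = 0`, also `f - 1 = ∑ cₙ (Uⁿ - U)`, and
each `Uⁿ - U` telescopes into a sum of `Uᵃ⁺¹ - Uᵃ` with `a ≥ 1`; splitting the `cₙ ∈ I[G]` into
monomials `z g` gives `f - 1 = ∑ (Uᵃ z g - Uᵃ⁺¹ z g)` over finitely many triples with `a ≥ 1`,
`z ∈ I`. For `P = ∏ (1 - Uᵃ z g)` and `Q = ∏ (1 - Uᵃ⁺¹ z g)` this gives `f P ≡ Q` modulo `I²`: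
modulo `I²` a product of terms `≡ 0 mod I` vanishes, so `P ≡ 1 - ∑ Uᵃ z g` and
`Q ≡ 1 - ∑ Uᵃ⁺¹ z g`. As `Q` is a unit, `f' = Q⁻¹ f P` satisfies the hypotheses with `I²` in place
of `I`, and `f P = Q f'`. Since `I ^ 2 ^ n = 0` for large `n`, iterating ends with `f' = 1`, and
the concatenated lists of triples factor `f`.
-/

open Polynomial Finset

theorem AddSubmonoid.exists_list_of_mem_closure_image {M α : Type*} [AddMonoid M] {f : α → M}
    {s : Set α} {x : M} (hx : x ∈ closure (f '' s)) :
    ∃ L : List α, (∀ t ∈ L, t ∈ s) ∧ (L.map f).sum = x := by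
  induction hx using closure_induction with
  | mem _ h =>
    obtain ⟨t, ht, rfl⟩ := h
    exact ⟨[t], by simpa using ht, by simp⟩
  | zero => exact ⟨[], by simp, rfl⟩
  | add _ _ _ _ h₁ h₂ =>
    obtain ⟨L₁, hL₁, rfl⟩ := h₁
    obtain ⟨L₂, hL₂, rfl⟩ := h₂
    exact ⟨L₁ ++ L₂, fun t ht => (List.mem_append.mp ht).elim (hL₁ t) (hL₂ t), by simp⟩

theorem map_units_inv_mul_mul_eq_one {R T F : Type*} [Monoid R] [Monoid T] [FunLike F R T]
    [MonoidHomClass F R T] (φ : F) (u : Rˣ) {f p : R} (hf : φ f = 1) (hp : φ p = φ u) :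
    φ (↑u⁻¹ * (f * p)) = 1 := by
  rw [map_mul, map_mul, hf, one_mul, hp, ← map_mul, Units.inv_mul, map_one]

section Ring

variable {R : Type*} [Ring R] {ι : Type*}

theorem map_list_prod_one_sub_eq {T F : Type*} [Ring T] [FunLike F R T] [RingHomClass F R T]
    (φ : F) {x y : ι → R} {L : List ι} (hxy : ∀ i ∈ L, φ (x i) = φ (y i)) :
    φ (L.map fun i => 1 - x i).prod = φ (L.map fun i => 1 - y i).prod := by
  simp only [map_list_prod, List.map_map]
  exact congrArg List.prod (List.map_congr_left fun i hi => by simp [hxy i hi])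

namespace TwoSidedIdeal

variable {J K : TwoSidedIdeal R}

theorem list_prod_one_sub_sub_mem (hJK : ∀ a ∈ J, ∀ b ∈ J, a * b ∈ K) {x : ι → R} {L : List ι}
    (hx : ∀ i ∈ L, x i ∈ J) :
    (L.map fun i => 1 - x i).prod - (1 - (L.map x).sum) ∈ K := by
  induction L with
  | nil => simp
  | cons i L ih =>
    have hD := ih fun j hj => hx j (List.mem_cons_of_mem i hj)
    have hxi := hx i List.mem_cons_self
    have hs : (L.map x).sum ∈ J := listSum_mem _ _ _ fun j hj => hx j (List.mem_cons_of_mem i hj)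
    set P := (L.map fun i => 1 - x i).prod
    have key : (1 - x i) * P - (1 - (x i + (L.map x).sum))
        = (P - (1 - (L.map x).sum)) - x i * (P - (1 - (L.map x).sum)) + x i * (L.map x).sum := by
      noncomm_ring
    simp only [List.map_cons, List.prod_cons, List.sum_cons]
    rw [key]
    exact K.add_mem (K.sub_mem hD (K.mul_mem_left _ _ hD)) (hJK _ hxi _ hs)

theorem mul_list_prod_one_sub_sub_mem (hJK : ∀ a ∈ J, ∀ b ∈ J, a * b ∈ K) {x y : ι → R}
    {L : List ι} (hx : ∀ i ∈ L, x i ∈ J) (hy : ∀ i ∈ L, y i ∈ J) {f : R}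
    (hf : (L.map fun i => x i - y i).sum = f - 1) :
    f * (L.map fun i => 1 - x i).prod - (L.map fun i => 1 - y i).prod ∈ K := by
  have hsx : (L.map x).sum ∈ J := listSum_mem _ _ _ hx
  have hsy : (L.map y).sum ∈ J := listSum_mem _ _ _ hy
  have hDx := list_prod_one_sub_sub_mem hJK hx
  have hDy := list_prod_one_sub_sub_mem hJK hy
  have hxy : (L.map fun i => x i - y i).sum = (L.map x).sum - (L.map y).sum := by
    simpa using Multiset.sum_map_sub (m := (L : Multiset ι)) (f := x) (g := y)
  rw [hxy, eq_sub_iff_add_eq'] at hf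
  set Dx := (L.map fun i => 1 - x i).prod - (1 - (L.map x).sum)
  set Dy := (L.map fun i => 1 - y i).prod - (1 - (L.map y).sum)
  have key : f * (L.map fun i => 1 - x i).prod - (L.map fun i => 1 - y i).prod
      = Dx - Dy - ((L.map x).sum - (L.map y).sum) * (L.map x).sum
        + ((L.map x).sum - (L.map y).sum) * Dx := by
    rw [← hf]; simp only [Dx, Dy]; noncomm_ring
  rw [key]
  exact K.add_mem (K.sub_mem (K.sub_mem hDx hDy) (hJK _ (J.sub_mem hsx hsy) _ hsx))
    (K.mul_mem_left _ _ hDx)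

end TwoSidedIdeal

theorem Polynomial.eq_sum_monomial_sub_monomial (p : R[X]) (h0 : p.coeff 0 = 0)
    (h1 : p.eval 1 = 0) :
    p = ∑ m ∈ range p.natDegree, ∑ i ∈ range m,
      (monomial (i + 1) (-p.coeff (m + 1)) - monomial (i + 1 + 1) (-p.coeff (m + 1))) := by
  have hsum : ∑ m ∈ range p.natDegree, p.coeff (m + 1) = 0 := by
    rw [eval_eq_sum_range, sum_range_succ'] at h1
    simpa [h0] using h1
  have telescope (m : ℕ) (c : R) :
      ∑ i ∈ range m, (monomial (i + 1) c - monomial (i + 1 + 1) c)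
        = monomial 1 c - monomial (m + 1) c :=
    sum_range_sub' (fun i => monomial (i + 1) c) m
  rw [sum_congr rfl fun m _ => telescope m _]
  simp only [map_neg, sub_neg_eq_add, neg_add_eq_sub, sum_sub_distrib, ← map_sum, hsum, map_zero,
    sub_zero]
  conv_lhs => rw [p.as_sum_range' (p.natDegree + 1) (Nat.lt_succ_self _), sum_range_succ', h0,
    map_zero, add_zero]

end Ring

namespace MonoidAlgebra

section CoordIdeal

variable {S : Type*} [CommRing S] {G : Type*} [Monoid G]

noncomputable def coordIdeal (I : Ideal S) : TwoSidedIdeal (MonoidAlgebra S G)[X] :=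
  TwoSidedIdeal.ker (Polynomial.mapRingHom (mapRingHom G (Ideal.Quotient.mk I)))

variable {I J : Ideal S}

theorem mem_coordIdeal {p : (MonoidAlgebra S G)[X]} :
    p ∈ coordIdeal I ↔ ∀ n g, (p.coeff n).coeff g ∈ I := by
  simp [coordIdeal, TwoSidedIdeal.mem_ker, Polynomial.ext_iff, MonoidAlgebra.ext_iff,
    Finsupp.ext_iff, Ideal.Quotient.eq_zero_iff_mem]

theorem coordIdeal_bot :
    coordIdeal (⊥ : Ideal S) = (⊥ : TwoSidedIdeal (MonoidAlgebra S G)[X]) := by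
  ext p
  simp [mem_coordIdeal, TwoSidedIdeal.mem_bot, Polynomial.ext_iff, MonoidAlgebra.ext_iff,
    Finsupp.ext_iff]

theorem mul_mem_coordIdeal {p q : (MonoidAlgebra S G)[X]} (hp : p ∈ coordIdeal I)
    (hq : q ∈ coordIdeal J) : p * q ∈ coordIdeal (I * J) := by
  classical
  rw [mem_coordIdeal] at *
  intro n g
  rw [Polynomial.coeff_mul, coeff_sum, Finset.sum_apply']
  refine Ideal.sum_mem _ fun ij _ => ?_
  rw [coeff_mul]
  refine Ideal.sum_mem _ fun a _ => Ideal.sum_mem _ fun b _ => ?_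
  dsimp only
  split_ifs
  · exact Ideal.mul_mem_mul (hp _ a) (hq _ b)
  · exact zero_mem _

end CoordIdeal

section Factorization

variable {S : Type*} [CommRing S] {G : Type*} [Monoid G] {I : Ideal S}

-- The triple `(a, z, g)` stands for `Uᵃ z g`; `raiseDegree` replaces `a` by `a + 1`.
noncomputable def monomialSingle (t : ℕ × S × G) : (MonoidAlgebra S G)[X] :=
  monomial t.1 (single t.2.2 t.2.1)

def raiseDegree (t : ℕ × S × G) : ℕ × S × G := (t.1 + 1, t.2)

def admissible (I : Ideal S) : Set (ℕ × S × G) := {t | 1 ≤ t.1 ∧ t.2.1 ∈ I}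

noncomputable def diffClosure (I : Ideal S) : AddSubmonoid (MonoidAlgebra S G)[X] :=
  AddSubmonoid.closure
    ((fun t => monomialSingle t - monomialSingle (raiseDegree t)) '' admissible I)

theorem monomial_sub_monomial_mem_diffClosure {a : ℕ} (ha : 1 ≤ a) {c : MonoidAlgebra S G}
    (hc : ∀ g, c.coeff g ∈ I) : monomial a c - monomial (a + 1) c ∈ diffClosure I := by
  rw [← c.sum_coeff_single, Finsupp.sum, map_sum, map_sum, ← Finset.sum_sub_distrib]
  exact sum_mem fun g _ => AddSubmonoid.subset_closure ⟨(a, c.coeff g, g), ⟨ha, hc g⟩, rfl⟩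

theorem sub_one_mem_diffClosure {f : (MonoidAlgebra S G)[X]} (h0 : f.coeff 0 = 1)
    (hf : f - 1 ∈ coordIdeal I) (h1 : f.eval 1 = 1) : f - 1 ∈ diffClosure I := by
  rw [(f - 1).eq_sum_monomial_sub_monomial (by simp [h0]) (by simp [h1])]
  exact sum_mem fun m _ => sum_mem fun i _ => monomial_sub_monomial_mem_diffClosure
    (Nat.le_add_left 1 i) fun g => by simpa using I.neg_mem (mem_coordIdeal.mp hf (m + 1) g)

theorem monomialSingle_mem_coordIdeal {t : ℕ × S × G} (ht : t.2.1 ∈ I) :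
    monomialSingle t ∈ coordIdeal I := by
  classical
  refine mem_coordIdeal.mpr fun n g => ?_
  rw [monomialSingle, coeff_monomial]
  split_ifs
  · rw [coeff_single, Finsupp.single_apply]
    split_ifs
    exacts [ht, I.zero_mem]
  · exact I.zero_mem

theorem isNilpotent_monomialSingle {t : ℕ × S × G} (ht : IsNilpotent t.2.1) :
    IsNilpotent (monomialSingle t) := by
  obtain ⟨k, hk⟩ := ht
  exact ⟨k, by rw [monomialSingle, monomial_pow, single_pow, hk, single_zero, map_zero]⟩

theorem exists_mul_prod_eq_prod_mul_sq {m : ℕ} (hI : I ^ m = ⊥) {f : (MonoidAlgebra S G)[X]}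
    (h0 : f.coeff 0 = 1) (hf : f - 1 ∈ coordIdeal I) (h1 : f.eval 1 = 1) :
    ∃ L : List (ℕ × S × G), (∀ t ∈ L, t ∈ admissible I) ∧ ∃ f' : (MonoidAlgebra S G)[X],
      f'.coeff 0 = 1 ∧ f' - 1 ∈ coordIdeal (I ^ 2) ∧ f'.eval 1 = 1 ∧
      f * (L.map fun t => 1 - monomialSingle t).prod
        = (L.map fun t => 1 - monomialSingle (raiseDegree t)).prod * f' := by
  obtain ⟨L, hL, hsum⟩ :=
    AddSubmonoid.exists_list_of_mem_closure_image (sub_one_mem_diffClosure h0 hf h1)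
  set P := (L.map fun t => 1 - monomialSingle t).prod
  set Q := (L.map fun t => 1 - monomialSingle (raiseDegree t)).prod
  obtain ⟨u, hu⟩ : IsUnit Q := List.prod_isUnit <| by
    simp only [List.mem_map]
    rintro _ ⟨t, ht, rfl⟩
    refine IsNilpotent.isUnit_one_sub (isNilpotent_monomialSingle ⟨m, ?_⟩)
    simpa [raiseDegree, hI] using Ideal.pow_mem_pow (hL t ht).2 m
  have hPQ : f * P - Q ∈ coordIdeal (I ^ 2) :=
    TwoSidedIdeal.mul_list_prod_one_sub_sub_mem (x := monomialSingle)
      (y := fun t => monomialSingle (raiseDegree t))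
      (fun a ha b hb => by rw [sq]; exact mul_mem_coordIdeal ha hb)
      (fun t ht => monomialSingle_mem_coordIdeal (hL t ht).2)
      (fun t ht => monomialSingle_mem_coordIdeal (hL t ht).2) hsum
  refine ⟨L, hL, ↑u⁻¹ * (f * P), ?_, ?_, ?_, ?_⟩
  · rw [← constantCoeff_apply] at h0 ⊢
    refine map_units_inv_mul_mul_eq_one constantCoeff u h0 ?_
    rw [hu]
    refine map_list_prod_one_sub_eq _ fun t ht => ?_
    simp [monomialSingle, raiseDegree, coeff_monomial, Nat.one_le_iff_ne_zero.mp (hL t ht).1]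
  · have : ↑u⁻¹ * (f * P) - 1 = ↑u⁻¹ * (f * P - Q) := by
      rw [mul_sub, ← hu, Units.inv_mul]
    rw [this]
    exact TwoSidedIdeal.mul_mem_left _ _ _ hPQ
  · let φ := eval₂RingHom' (RingHom.id (MonoidAlgebra S G)) 1 fun a => Commute.one_right a
    refine map_units_inv_mul_mul_eq_one φ u h1 ?_
    rw [hu]
    refine map_list_prod_one_sub_eq φ fun t ht => ?_
    simp [φ, monomialSingle, raiseDegree]
  · change f * P = Q * _
    rw [← hu, Units.mul_inv_cancel_left]

theorem exists_mul_prod_eq_prod (n : ℕ) (hI : I ^ 2 ^ n = ⊥)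
    {f : (MonoidAlgebra S G)[X]} (h0 : f.coeff 0 = 1) (hf : f - 1 ∈ coordIdeal I)
    (h1 : f.eval 1 = 1) :
    ∃ L : List (ℕ × S × G), (∀ t ∈ L, t ∈ admissible I) ∧
      f * (L.map fun t => 1 - monomialSingle t).prod
        = (L.map fun t => 1 - monomialSingle (raiseDegree t)).prod := by
  induction n generalizing I f with
  | zero =>
    rw [pow_zero, pow_one] at hI
    rw [hI, coordIdeal_bot, TwoSidedIdeal.mem_bot, sub_eq_zero] at hf
    exact ⟨[], by simp, by simp [hf]⟩
  | succ n ih =>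
    obtain ⟨L₀, hL₀, f', h0', hf', h1', hff'⟩ := exists_mul_prod_eq_prod_mul_sq hI h0 hf h1
    obtain ⟨L₁, hL₁, hf'L₁⟩ := ih (by rwa [← pow_mul, ← pow_succ']) h0' hf' h1'
    refine ⟨L₀ ++ L₁, fun t ht => ?_, ?_⟩
    · rcases List.mem_append.mp ht with ht | ht
      exacts [hL₀ t ht, ⟨(hL₁ t ht).1, Ideal.pow_le_self two_ne_zero (hL₁ t ht).2⟩]
    · simp only [List.map_append, List.prod_append]
      rw [← mul_assoc, hff', mul_assoc, hf'L₁]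

end Factorization

end MonoidAlgebra

theorem stmt_13_general (S : Type*) [CommRing S] (G : Type*) [Group G]
    (I : Ideal S) (N : ℕ) (hInil : I ^ N = ⊥)
    (f : Polynomial (MonoidAlgebra S G))
    (hconst : f.coeff 0 = 1)
    (hfI : ∀ (n : ℕ) (x : G), ((f - 1).coeff n).coeff x ∈ I)
    (heval : f.eval 1 = 1) :
    ∃ (k : ℕ) (a : Fin k → ℕ) (z : Fin k → S) (gg : Fin k → G),
      (∀ j, 1 ≤ a j) ∧ (∀ j, z j ∈ I) ∧
      f * (List.ofFn fun j =>
          (1 - Polynomial.X ^ (a j) *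
            Polynomial.C (MonoidAlgebra.single (gg j) (z j)))).prod =
        (List.ofFn fun j =>
          (1 - Polynomial.X ^ (a j + 1) *
            Polynomial.C (MonoidAlgebra.single (gg j) (z j)))).prod := by
  have hI : I ^ 2 ^ N = ⊥ :=
    le_bot_iff.mp (hInil ▸ Ideal.pow_le_pow_right Nat.lt_two_pow_self.le)
  obtain ⟨L, hL, hfL⟩ := MonoidAlgebra.exists_mul_prod_eq_prod N hI hconst
    (MonoidAlgebra.mem_coordIdeal.mpr hfI) heval
  refine ⟨L.length, fun j => L[j].1, fun j => L[j].2.1, fun j => L[j].2.2,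
    fun j => (hL _ (L.getElem_mem _)).1, fun j => (hL _ (L.getElem_mem _)).2, ?_⟩
  rw [← List.ofFn_getElem_eq_map, ← List.ofFn_getElem_eq_map] at hfL
  simpa [X_pow_mul, C_mul_X_pow_eq_monomial, MonoidAlgebra.monomialSingle,
    MonoidAlgebra.raiseDegree] using hfL

/-- Let `S` be a commutative ring, `G` a group, `I ⊆ S` a nilpotent ideal, and
`f ∈ S[G][U]` a polynomial with constant term `1`, with `f ≡ 1 mod I`, and with
`f(1) = 1`.  Then `f` is a finite product of the units
`(1 − U^{a+1} z g)·(1 − U^a z g)^{−1}` with `a ≥ 1`, `z ∈ I`, `g ∈ G`; equivalently,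
`f · ∏_j (1 − U^{a_j} z_j g_j) = ∏_j (1 − U^{a_j+1} z_j g_j)` for suitable finitely many
triples `(a_j, z_j, g_j)`. -/
theorem stmt_13 (S : Type*) [CommRing S] (G : Type*) [Group G]
    (I : Ideal S) (N : ℕ) (hN : 1 ≤ N) (hInil : I ^ N = ⊥)
    (f : Polynomial (MonoidAlgebra S G))
    (hconst : f.coeff 0 = 1)
    (hfI : ∀ (n : ℕ) (x : G), ((f - 1).coeff n).coeff x ∈ I)
    (heval : f.eval 1 = 1) :
    ∃ (k : ℕ) (a : Fin k → ℕ) (z : Fin k → S) (gg : Fin k → G),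
      (∀ j, 1 ≤ a j) ∧ (∀ j, z j ∈ I) ∧
      f * (List.ofFn fun j =>
          (1 - Polynomial.X ^ (a j) *
            Polynomial.C (MonoidAlgebra.single (gg j) (z j)))).prod =
        (List.ofFn fun j =>
          (1 - Polynomial.X ^ (a j + 1) *
            Polynomial.C (MonoidAlgebra.single (gg j) (z j)))).prod :=
  stmt_13_general S G I N hInil f hconst hfI heval
end

section
/- Let f ∈ R[T] be a polynomial satisfying f(U·T) = f(U)·f(T) in the polynomial ring R[U, T] (substituting U·T, respectively U, respectively T, for the variable of f). Then the coefficients a_i of f are pairwise orthogonal idempotents: a_i^2 = a_i for all i, and a_i·a_j = 0 whenever i ≠ j. Consequently R decomposes as a finite product of rings R_0 × ⋯ × R_N × R_∞ such that on each factor R_d (0 ≤ d ≤ N) the image of f is T^d, and on R_∞ the image of f is 0. -/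
open Polynomial

/-- Let `R` be a commutative ring and `f ∈ R[T]` with `f(U·T) = f(U)·f(T)` in `R[U, T]`.
Then the coefficients of `f` are pairwise orthogonal idempotents, and consequently `R`
decomposes as a finite product `R_0 × ⋯ × R_N × R_∞` such that the image of `f` on the
factor `R_d` is `T^d` and the image of `f` on `R_∞` is `0`. -/
theorem stmt_14 (R : Type*) [CommRing R] (f : Polynomial R)
    (hf : Polynomial.eval₂
        ((Polynomial.C : Polynomial R →+* Polynomial (Polynomial R)).comp
          (Polynomial.C : R →+* Polynomial R))
        (Polynomial.C Polynomial.X * Polynomial.X) f =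
      Polynomial.C f * f.map (Polynomial.C : R →+* Polynomial R)) :
    (∀ i, f.coeff i * f.coeff i = f.coeff i) ∧
    (∀ i j, i ≠ j → f.coeff i * f.coeff j = 0) ∧
    (∀ d : ℕ, Polynomial.map (Ideal.Quotient.mk (Ideal.span {1 - f.coeff d})) f =
      Polynomial.X ^ d) ∧
    (Polynomial.map (Ideal.Quotient.mk (Ideal.span (Set.range f.coeff))) f = 0) ∧
    Function.Bijective
      ((Pi.ringHom fun d : Fin (f.natDegree + 1) =>
          Ideal.Quotient.mk (Ideal.span {1 - f.coeff d})).prod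
        (Ideal.Quotient.mk (Ideal.span (Set.range f.coeff)))) := by
  have key : ∀ i j, f.coeff i * f.coeff j = if i = j then f.coeff j else 0 := by
    intro i j
    have h := congrArg (fun p => (p.coeff j).coeff i) hf
    simp only [eval₂_eq_sum_range, RingHom.comp_apply, mul_pow, ← C_pow, mul_comm,
      mul_left_comm, ← mul_assoc, ← C_mul, finset_sum_coeff, coeff_C_mul,
      coeff_X_pow, mul_ite, mul_one, mul_zero, ite_mul, zero_mul, one_mul,
      apply_ite (fun p : Polynomial R => p.coeff i), coeff_zero, coeff_mul_C,
      coeff_map] at h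
    rw [← h, Finset.sum_ite_eq]
    by_cases hj : j ∈ Finset.range (f.natDegree + 1)
    · simp [hj]
    · have hz : f.coeff j = 0 :=
        f.coeff_eq_zero_of_natDegree_lt (by simp at hj; omega)
      simp [hj, hz]
  have idem : ∀ i, f.coeff i * f.coeff i = f.coeff i := fun i => by simpa using key i i
  have orth : ∀ i j, i ≠ j → f.coeff i * f.coeff j = 0 := fun i j h => by
    simpa [h] using key i j
  -- the image of each coefficient in the quotient by (1 - a_d)
  have mkco : ∀ d i, Ideal.Quotient.mk (Ideal.span {1 - f.coeff d}) (f.coeff i) =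
      if i = d then 1 else 0 := by
    intro d i
    by_cases h : i = d
    · subst h
      have h1 : (Ideal.Quotient.mk (Ideal.span {1 - f.coeff i})) (1 - f.coeff i) = 0 :=
        Ideal.Quotient.eq_zero_iff_mem.2 (Ideal.subset_span rfl)
      rw [map_sub, map_one, sub_eq_zero] at h1
      simp [← h1]
    · have hm : f.coeff i ∈ Ideal.span {1 - f.coeff d} :=
        Ideal.mem_span_singleton.2 ⟨f.coeff i, by
          rw [sub_mul, one_mul, orth d i (Ne.symm h), sub_zero]⟩
      simp [h, Ideal.Quotient.eq_zero_iff_mem.2 hm]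
  have part3 : ∀ d : ℕ, Polynomial.map (Ideal.Quotient.mk (Ideal.span {1 - f.coeff d})) f =
      Polynomial.X ^ d := by
    intro d
    ext n
    rw [coeff_map, mkco, coeff_X_pow]
  have part4 : Polynomial.map (Ideal.Quotient.mk (Ideal.span (Set.range f.coeff))) f = 0 := by
    ext n
    rw [coeff_map, coeff_zero, Ideal.Quotient.eq_zero_iff_mem]
    exact Ideal.subset_span ⟨n, rfl⟩
  refine ⟨idem, orth, part3, part4, ?_⟩
  set N := f.natDegree with hN
  set e : R := ∑ d ∈ Finset.range (N + 1), f.coeff d with he_def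
  have he : ∀ i, f.coeff i * e = f.coeff i := by
    intro i
    rw [he_def, Finset.mul_sum]
    simp_rw [key]
    rw [Finset.sum_ite_eq]
    by_cases hi : i ∈ Finset.range (N + 1)
    · simp [hi]
    · have : f.coeff i = 0 := f.coeff_eq_zero_of_natDegree_lt (by simp at hi; omega)
      simp [hi, this]
  have hee : e * e = e := by
    rw [he_def, Finset.sum_mul, ← he_def]
    exact Finset.sum_congr rfl fun d _ => he d
  constructor
  · rw [injective_iff_map_eq_zero]
    intro x hx
    rw [Prod.ext_iff] at hx
    obtain ⟨hx1, hx2⟩ := hx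
    have h1 : ∀ d : Fin (N + 1),
        Ideal.Quotient.mk (Ideal.span {1 - f.coeff d.val}) x = 0 := fun d =>
      congrFun hx1 d
    have h2 : Ideal.Quotient.mk (Ideal.span (Set.range f.coeff)) x = 0 := hx2
    have hxa : ∀ d : ℕ, d < N + 1 → x * f.coeff d = 0 := by
      intro d hd
      obtain ⟨c, hc⟩ := Ideal.mem_span_singleton'.1
        (Ideal.Quotient.eq_zero_iff_mem.1 (h1 ⟨d, hd⟩))
      calc x * f.coeff d = c * (1 - f.coeff d) * f.coeff d := by rw [hc]
        _ = c * (f.coeff d - f.coeff d * f.coeff d) := by ring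
        _ = 0 := by rw [idem, sub_self, mul_zero]
    have hxe : x * e = 0 := by
      rw [he_def, Finset.mul_sum]
      exact Finset.sum_eq_zero fun d hd => hxa d (Finset.mem_range.1 hd)
    have hle : Ideal.span (Set.range f.coeff) ≤ Ideal.span {e} := by
      rw [Ideal.span_le]
      rintro _ ⟨i, rfl⟩
      by_cases hi : i < N + 1
      · exact Ideal.mem_span_singleton.2 ⟨f.coeff i, by rw [mul_comm]; exact (he i).symm⟩
      · have : f.coeff i = 0 := f.coeff_eq_zero_of_natDegree_lt (by omega)
        rw [this]
        exact Ideal.zero_mem _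
    obtain ⟨c, hc⟩ := Ideal.mem_span_singleton'.1
      (hle (Ideal.Quotient.eq_zero_iff_mem.1 h2))
    calc x = c * e := hc.symm
      _ = c * (e * e) := by rw [hee]
      _ = (c * e) * e := by ring
      _ = x * e := by rw [hc]
      _ = 0 := hxe
  · rintro ⟨g, h⟩
    choose x hx using fun d : Fin (N + 1) =>
      Ideal.Quotient.mk_surjective (I := Ideal.span {1 - f.coeff d.val}) (g d)
    obtain ⟨y, hy⟩ := Ideal.Quotient.mk_surjective h
    refine ⟨(∑ d : Fin (N + 1), x d * f.coeff d.val) + y * (1 - e), ?_⟩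
    have hmke : ∀ d : Fin (N + 1),
        Ideal.Quotient.mk (Ideal.span {1 - f.coeff d.val}) e = 1 := by
      intro d
      rw [he_def, map_sum]
      simp_rw [mkco]
      rw [Finset.sum_ite_eq']
      simp [d.isLt]
    have hmke' : Ideal.Quotient.mk (Ideal.span (Set.range f.coeff)) e = 0 := by
      rw [he_def, map_sum]
      exact Finset.sum_eq_zero fun i _ =>
        Ideal.Quotient.eq_zero_iff_mem.2 (Ideal.subset_span ⟨i, rfl⟩)
    refine Prod.ext (funext fun d => ?_) ?_
    · show Ideal.Quotient.mk _ _ = g d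
      rw [map_add, map_sum, map_mul, map_sub, map_one, hmke d, sub_self, mul_zero, add_zero]
      simp_rw [map_mul, mkco]
      have : ∀ d' : Fin (N + 1), ((d' : ℕ) = (d : ℕ)) = (d' = d) := fun d' => by
        simp [Fin.val_inj]
      simp_rw [this, mul_ite, mul_one, mul_zero, Finset.sum_ite_eq', Finset.mem_univ,
        if_pos, hx]
    · show Ideal.Quotient.mk _ _ = h
      rw [map_add, map_sum, map_mul, map_sub, map_one, hmke', sub_zero, mul_one]
      have : ∀ d : Fin (N + 1), Ideal.Quotient.mk (Ideal.span (Set.range f.coeff))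
          (x d * f.coeff d.val) = 0 := fun d => by
        have h0 : Ideal.Quotient.mk (Ideal.span (Set.range f.coeff)) (f.coeff d.val) = 0 :=
          Ideal.Quotient.eq_zero_iff_mem.2 (Ideal.subset_span ⟨d.val, rfl⟩)
        rw [map_mul, h0, mul_zero]
      rw [Finset.sum_eq_zero fun d _ => this d, zero_add, hy]
end

section
/- Let A be a commutative ring, k ≥ 1, and let f_1, …, f_k ∈ A[T^{±1}] be Laurent polynomials, with f_i = Σ_{j∈ℤ} c_{i,j} T^j (finitely many c_{i,j} nonzero). Suppose that for every tuple of integers (a_1, …, a_k) one has f_1(T^{a_1})·f_2(T^{a_2})⋯f_k(T^{a_k}) = 0 in A[T^{±1}], where f_i(T^{a_i}) denotes the image of f_i under the ring endomorphism sending T to T^{a_i}. Then c_{1,j_1}·c_{2,j_2}⋯c_{k,j_k} = 0 for every tuple (j_1, …, j_k) ∈ ℤ^k. -/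
/-!
If `a` exceeds `|q - m|` for every exponent `q` of `g`, the coefficient of `T^(a*j + m)` in
`f(T^a) * g` is `f_j * g_m` alone, so `f(T^a) * g = 0` for all `a` forces `f_j • g = 0`.
Applying this to the factors of `f_1(T^(a_1)) ⋯ f_k(T^(a_k))` one at a time, and absorbing each
extracted coefficient into a scalar in front of the remaining product, gives the theorem.
-/

open LaurentPolynomial

theorem AddMonoidAlgebra.coeff_mapDomainRingHom_mul {R M G : Type*} [Semiring R] [AddMonoid M]
    [AddGroup G] (φ : M →+ G) (f : AddMonoidAlgebra R M) (g : AddMonoidAlgebra R G) (n : G) :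
    (mapDomainRingHom R φ f * g).coeff n = f.coeff.sum fun p r ↦ r * g.coeff (-φ p + n) := by
  rw [coeff_mul_apply_left]
  exact Finsupp.sum_mapDomain_index (by simp) (by simp [add_mul])

theorem Int.exists_forall_mul_add_notMem (s : Finset ℤ) (m : ℤ) :
    ∃ a : ℤ, ∀ d ≠ 0, a * d + m ∉ s := by
  refine ⟨1 + ∑ q ∈ s, |q - m|, fun d hd hmem ↦ ?_⟩
  set a := 1 + ∑ q ∈ s, |q - m|
  have hq : |a * d + m - m| ≤ ∑ q ∈ s, |q - m| :=
    Finset.single_le_sum (f := fun q ↦ |q - m|) (fun _ _ ↦ abs_nonneg _) hmem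
  have ha : 0 < a := by positivity
  have hd : a ≤ |a * d| := by
    rw [abs_mul, abs_of_pos ha]
    exact le_mul_of_one_le_right ha.le (Int.one_le_abs hd)
  simp only [add_sub_cancel_right] at hq
  omega

theorem LaurentPolynomial.coeff_smul_eq_zero_of_forall_mapDomain_mul_eq_zero {R : Type*}
    [Semiring R] {f g : R[T;T⁻¹]}
    (h : ∀ a : ℤ, AddMonoidAlgebra.mapDomainRingHom R (AddMonoidHom.mulLeft a) f * g = 0) (j : ℤ) :
    f.coeff j • g = 0 := by
  ext m
  obtain ⟨a, ha⟩ := Int.exists_forall_mul_add_notMem g.coeff.support m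
  have hcoeff := congrArg (AddMonoidAlgebra.coeff · (a * j + m)) (h a)
  simp only [AddMonoidAlgebra.coeff_mapDomainRingHom_mul] at hcoeff
  rw [Finsupp.sum_eq_single j] at hcoeff
  · simpa using hcoeff
  · intro p _ hpj
    have hshift : -(a * p) + (a * j + m) = a * (j - p) + m := by ring
    rw [AddMonoidHom.coe_mulLeft, hshift,
      Finsupp.notMem_support_iff.mp (ha _ (sub_ne_zero.mpr hpj.symm)), mul_zero]
  · simp

theorem LaurentPolynomial.mul_prod_coeff_eq_zero_of_forall_smul_prod_mapDomain_eq_zero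
    {R : Type*} [CommSemiring R] {k : ℕ} (f : Fin k → R[T;T⁻¹]) (c : R)
    (h : ∀ a : Fin k → ℤ,
      c • ∏ i, AddMonoidAlgebra.mapDomainRingHom R (AddMonoidHom.mulLeft (a i)) (f i) = 0)
    (j : Fin k → ℤ) : c * ∏ i, (f i).coeff (j i) = 0 := by
  induction k generalizing c with
  | zero => simpa using congrArg (AddMonoidAlgebra.coeff · 0) (h Fin.elim0)
  | succ k ih =>
    have htail : ∀ a : Fin k → ℤ, ((f 0).coeff (j 0) * c) •
        ∏ i, AddMonoidAlgebra.mapDomainRingHom R (AddMonoidHom.mulLeft (a i)) (f i.succ) = 0 := by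
      intro a
      rw [mul_smul]
      refine coeff_smul_eq_zero_of_forall_mapDomain_mul_eq_zero (fun a₀ ↦ ?_) (j 0)
      simpa [Fin.prod_univ_succ, mul_smul_comm] using h (Fin.cons a₀ a)
    rw [Fin.prod_univ_succ, mul_left_comm, ← mul_assoc]
    exact ih (fun i ↦ f i.succ) _ htail (fun i ↦ j i.succ)

theorem stmt_15_general (A : Type*) [CommRing A] (k : ℕ)
    (f : Fin k → LaurentPolynomial A)
    (hprod : ∀ a : Fin k → ℤ,
      (∏ i : Fin k,
        AddMonoidAlgebra.mapDomainRingHom A (AddMonoidHom.mulLeft (a i)) (f i)) = 0) :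
    ∀ j : Fin k → ℤ, (∏ i : Fin k, (f i).coeff (j i)) = 0 := by
  intro j
  simpa using mul_prod_coeff_eq_zero_of_forall_smul_prod_mapDomain_eq_zero f 1
    (by simpa using hprod) j

/-- Let `A` be a commutative ring, `k ≥ 1`, and `f_1, …, f_k ∈ A[T^{±1}]` Laurent
polynomials with coefficients `c_{i,j}`.  If for every tuple of integers `(a_1, …, a_k)`
one has `f_1(T^{a_1}) ⋯ f_k(T^{a_k}) = 0`, then `c_{1,j_1} ⋯ c_{k,j_k} = 0` for every
tuple `(j_1, …, j_k)`. -/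
theorem stmt_15 (A : Type*) [CommRing A] (k : ℕ) (hk : 1 ≤ k)
    (f : Fin k → LaurentPolynomial A)
    (hprod : ∀ a : Fin k → ℤ,
      (∏ i : Fin k,
        AddMonoidAlgebra.mapDomainRingHom A (AddMonoidHom.mulLeft (a i)) (f i)) = 0) :
    ∀ j : Fin k → ℤ, (∏ i : Fin k, (f i).coeff (j i)) = 0 :=
  stmt_15_general A k f hprod
end
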